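/- arXiv:2301.08445 — 8 statements merged into one kernel-verified Lean document; each statement's English description precedes it below -/
import Mathlib

section
/- Let T, τ, J, 𝕄 be natural numbers with τ ≥ 1, J ≥ 1 and 𝕄 ≤ T. Suppose 0 = t_0 < t_1 < ⋯ < t_J = T are integers such that t_{j+1} − t_j ≤ τ for every 0 ≤ j ≤ J−1, and the set of indices j with 0 ≤ j ≤ J−2 and t_{j+1} − t_j < τ has cardinality at most 𝕄. Then J ≤ ⌈(T − 𝕄)/τ⌉ + 𝕄. -/
/-! Every episode has length at least one and every one that is not short has length at
least `τ`, so the `m ≤ 𝕄` short episodes, the `g` full ones and the last one give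
`m + τ g + 1 ≤ T`. If `m + g < 𝕄` there is nothing to prove; otherwise at least
`k = m + g - 𝕄` full episodes remain after setting `𝕄 - m` of them aside as if they were
short, whence `τ k < T - 𝕄` and `k < ⌈(T - 𝕄)/τ⌉`. -/

open Finset

theorem Nat.sum_range_tsub_add_eq {f : ℕ → ℕ} {n : ℕ} (h : ∀ i < n, f i ≤ f (i + 1)) :
    ∑ i ∈ range n, (f (i + 1) - f i) + f 0 = f n := by
  induction n with
  | zero => simp
  | succ n ih =>
    rw [sum_range_succ, add_right_comm, ih fun i hi => h i (by omega)]
    have := h n (by omega)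
    omega

theorem Nat.lt_ceilDiv_iff_mul_lt {a b c : ℕ} (ha : 0 < a) : c < b ⌈/⌉ a ↔ a * c < b := by
  simpa only [not_le] using (ceilDiv_le_iff_le_mul ha).not

theorem Finset.card_filter_lt_add_mul_card_filter_not_lt_le_sum {ι : Type*} (s : Finset ι)
    {d : ι → ℕ} (τ : ℕ) (hd : ∀ i ∈ s, 0 < d i) :
    #{i ∈ s | d i < τ} + τ * #{i ∈ s | ¬ d i < τ} ≤ ∑ i ∈ s, d i := by
  rw [← sum_filter_add_sum_filter_not s (fun i => d i < τ)]
  gcongr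
  · simpa using card_nsmul_le_sum {i ∈ s | d i < τ} d 1
      fun i hi => hd i (mem_filter.mp hi).1
  · simpa [mul_comm] using card_nsmul_le_sum {i ∈ s | ¬ d i < τ} d τ
      fun i hi => not_lt.mp (mem_filter.mp hi).2

theorem Nat.add_add_one_le_ceilDiv_add {m g M τ T : ℕ} (hτ : 1 ≤ τ) (hm : m ≤ M)
    (hT : m + τ * g < T) : m + g + 1 ≤ (T - M) ⌈/⌉ τ + M := by
  by_cases hsmall : m + g < M
  · omega
  obtain ⟨k, rfl⟩ : ∃ k, g = k + (M - m) := ⟨g - (M - m), by omega⟩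
  have hk : τ * k < T - M := by
    have := Nat.le_mul_of_pos_left (M - m) hτ
    rw [mul_add] at hT
    omega
  have := (lt_ceilDiv_iff_mul_lt hτ).mpr hk
  omega

theorem batch_count_bound_general (T τ J 𝕄 : ℕ) (hτ : 1 ≤ τ)
    (t : ℕ → ℕ) (ht0 : t 0 = 0) (htJ : t J = T)
    (hmono : ∀ j, j < J → t j < t (j + 1))
    (hcard : ((Finset.range (J - 1)).filter (fun j => t (j + 1) - t j < τ)).card ≤ 𝕄) :
    J ≤ (T - 𝕄 + τ - 1) / τ + 𝕄 := by
  cases J with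
  | zero => exact Nat.zero_le _
  | succ n =>
    rw [Nat.add_sub_cancel] at hcard
    have htotal : ∑ j ∈ range n, (t (j + 1) - t j) + (t (n + 1) - t n) = T := by
      rw [← sum_range_succ, ← htJ, ← Nat.sum_range_tsub_add_eq fun i hi => (hmono i hi).le,
        ht0, add_zero]
    have hcount := card_filter_lt_add_mul_card_filter_not_lt_le_sum (range n) τ
      fun j hj => Nat.sub_pos_of_lt (hmono j (Nat.lt_succ_of_lt (mem_range.mp hj)))
    have hsplit := card_filter_add_card_filter_not (s := range n) (fun j => t (j + 1) - t j < τ)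
    rw [card_range] at hsplit
    have hlast := Nat.sub_pos_of_lt (hmono n n.lt_succ_self)
    have := Nat.add_add_one_le_ceilDiv_add (T := T)
      (g := #{j ∈ range n | ¬ t (j + 1) - t j < τ})
      hτ hcard (by omega)
    rwa [hsplit, Nat.ceilDiv_eq_add_pred_div] at this

/-- Bound on the number of batches: the horizon {0,…,T} is split into J episodes
of length at most τ, all but the last have full length τ except at most 𝕄
early-terminated ones; then J ≤ ⌈(T−𝕄)/τ⌉ + 𝕄. -/
theorem batch_count_bound (T τ J 𝕄 : ℕ) (hτ : 1 ≤ τ) (hJ : 1 ≤ J) (h𝕄T : 𝕄 ≤ T)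
    (t : ℕ → ℕ) (ht0 : t 0 = 0) (htJ : t J = T)
    (hmono : ∀ j, j < J → t j < t (j + 1))
    (hlen : ∀ j, j < J → t (j + 1) - t j ≤ τ)
    (hcard : ((Finset.range (J - 1)).filter (fun j => t (j + 1) - t j < τ)).card ≤ 𝕄) :
    J ≤ (T - 𝕄 + τ - 1) / τ + 𝕄 :=
  batch_count_bound_general T τ J 𝕄 hτ t ht0 htJ hmono hcard
end

section
/- Let L_f ≥ 1, L_π ≥ 1, κ ≥ 1, β ≥ 0, w_max ≥ 0, π̄0 ≥ 0 and 0 < ρ < 1. Let f : ℝ^n × ℝ^m × ℝ^n → ℝ^n satisfy ‖f(x,u,w) − f(x',u',w')‖ ≤ L_f(‖x−x'‖ + ‖u−u'‖ + ‖w−w'‖) for all arguments and f(0,0,0) = 0, and let π : ℝ^n → ℝ^m be L_π-Lipschitz with ‖π(0)‖ ≤ π̄0. Let s < e be natural numbers and x : ℕ → ℝ^n, w : ℕ → ℝ^n be sequences with ‖w_t‖ ≤ w_max for all t, x_e = f(x_{e−1}, π(x_{e−1}), w_{e−1}), and ‖x_t‖ ≤ κ ρ^{t−s}‖x_s‖ +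 β w_max for all t with s < t ≤ e−1. Then (i) ‖x_e‖ ≤ L_f(1+L_π) κ ρ^{e−1−s} ‖x_s‖ + L_f((1+L_π)β w_max + w_max + π̄0); (ii) ‖x_e‖² ≤ 2 L_f²(1+L_π)² κ² ρ^{2(e−1−s)} ‖x_s‖² + 2 L_f²((1+L_π)β w_max + w_max + π̄0)²; (iii) ‖x_e‖⁴ ≤ 8 L_f⁴(1+L_π)⁴ κ⁴ ρ^{4(e−1−s)} ‖x_s‖⁴ + 8 L_f⁴((1+L_π)β w_max + w_max + π̄0)⁴. -/
/-!
One step of the dynamics from `x_{e-1}` multiplies its norm by at most `L_f (1 + L_π)` and adds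
`L_f (‖w_{e-1}‖ + ‖π 0‖)`, since `f` and `π` are Lipschitz and `f 0 0 0 = 0`. The certificate
bounds `‖x_{e-1}‖` (trivially so when `e - 1 = s`, as `κ ≥ 1`), which gives the linear bound; the
quadratic and quartic ones follow from `(a + b)² ≤ 2 (a² + b²)`, applied once and twice.
-/

section PowerBounds

variable {R : Type*} [CommRing R] [LinearOrder R] [IsStrictOrderedRing R] {r a b : R}

lemma sq_le_two_mul_add_sq_of_le_add (hr : 0 ≤ r) (h : r ≤ a + b) :
    r ^ 2 ≤ 2 * (a ^ 2 + b ^ 2) :=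
  (pow_le_pow_left₀ hr h 2).trans add_sq_le

lemma pow_four_le_eight_mul_add_pow_four_of_le_add (hr : 0 ≤ r) (h : r ≤ a + b) :
    r ^ 4 ≤ 8 * (a ^ 4 + b ^ 4) :=
  calc r ^ 4 = (r ^ 2) ^ 2 := by ring
    _ ≤ (2 * (a ^ 2 + b ^ 2)) ^ 2 :=
      pow_le_pow_left₀ (sq_nonneg r) (sq_le_two_mul_add_sq_of_le_add hr h) 2
    _ = 4 * (a ^ 2 + b ^ 2) ^ 2 := by ring
    _ ≤ 4 * (2 * ((a ^ 2) ^ 2 + (b ^ 2) ^ 2)) := by gcongr; exact add_sq_le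
    _ = 8 * (a ^ 4 + b ^ 4) := by ring

end PowerBounds

section Lipschitz

variable {E F G H : Type*} [SeminormedAddCommGroup E] [SeminormedAddCommGroup F]
  [SeminormedAddCommGroup G] [SeminormedAddCommGroup H]

lemma norm_apply_le_mul_norm_add_norm_apply_zero {π : E → F} {L : ℝ}
    (hπ : ∀ x y, ‖π x - π y‖ ≤ L * ‖x - y‖) (x : E) : ‖π x‖ ≤ L * ‖x‖ + ‖π 0‖ :=
  calc ‖π x‖ ≤ ‖π x - π 0‖ + ‖π 0‖ := norm_le_norm_sub_add _ _
    _ ≤ L * ‖x‖ + ‖π 0‖ := by simpa using add_le_add_right (hπ x 0) ‖π 0‖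

lemma norm_apply₃_le_of_map_zero {f : E → F → G → H} {L : ℝ}
    (hf : ∀ x u w x' u' w', ‖f x u w - f x' u' w'‖ ≤ L * (‖x - x'‖ + ‖u - u'‖ + ‖w - w'‖))
    (hf0 : f 0 0 0 = 0) (x : E) (u : F) (w : G) : ‖f x u w‖ ≤ L * (‖x‖ + ‖u‖ + ‖w‖) := by
  simpa [hf0] using hf x u w 0 0 0

lemma norm_closed_loop_le {f : E → F → G → E} {π : E → F} {Lf Lπ : ℝ} (hLf : 0 ≤ Lf)
    (hf : ∀ x u w x' u' w', ‖f x u w - f x' u' w'‖ ≤ Lf * (‖x - x'‖ + ‖u - u'‖ + ‖w - w'‖))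
    (hf0 : f 0 0 0 = 0) (hπ : ∀ x y, ‖π x - π y‖ ≤ Lπ * ‖x - y‖) (x : E) (w : G) :
    ‖f x (π x) w‖ ≤ Lf * ((1 + Lπ) * ‖x‖ + ‖w‖ + ‖π 0‖) :=
  calc ‖f x (π x) w‖ ≤ Lf * (‖x‖ + ‖π x‖ + ‖w‖) := norm_apply₃_le_of_map_zero hf hf0 x (π x) w
    _ ≤ Lf * (‖x‖ + (Lπ * ‖x‖ + ‖π 0‖) + ‖w‖) := by
      gcongr; exact norm_apply_le_mul_norm_add_norm_apply_zero hπ x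
    _ = Lf * ((1 + Lπ) * ‖x‖ + ‖w‖ + ‖π 0‖) := by ring

end Lipschitz

lemma le_mul_pow_mul_add_of_forall_lt_of_le {a : ℕ → ℝ} {κ ρ c : ℝ} {s T t : ℕ}
    (hκ : 1 ≤ κ) (hc : 0 ≤ c) (ha : 0 ≤ a s)
    (h : ∀ t, s < t → t ≤ T → a t ≤ κ * ρ ^ (t - s) * a s + c) (hst : s ≤ t) (htT : t ≤ T) :
    a t ≤ κ * ρ ^ (t - s) * a s + c := by
  rcases hst.eq_or_lt with rfl | hst
  · simp only [Nat.sub_self, pow_zero, mul_one]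
    linarith [le_mul_of_one_le_left ha hκ]
  · exact h t hst htT

theorem break_state_bound_general (n m : ℕ) (Lf Lπ κ β wmax pibar0 ρ : ℝ)
    (hLf : 1 ≤ Lf) (hLπ : 1 ≤ Lπ) (hκ : 1 ≤ κ) (hβ : 0 ≤ β)
    (f : EuclideanSpace ℝ (Fin n) → EuclideanSpace ℝ (Fin m) → EuclideanSpace ℝ (Fin n)
          → EuclideanSpace ℝ (Fin n))
    (hf : ∀ x u w x' u' w', ‖f x u w - f x' u' w'‖ ≤ Lf * (‖x - x'‖ + ‖u - u'‖ + ‖w - w'‖))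
    (hf0 : f 0 0 0 = 0)
    (π : EuclideanSpace ℝ (Fin n) → EuclideanSpace ℝ (Fin m))
    (hπ : ∀ x y, ‖π x - π y‖ ≤ Lπ * ‖x - y‖) (hπ0 : ‖π 0‖ ≤ pibar0)
    (s e : ℕ) (hse : s < e)
    (x : ℕ → EuclideanSpace ℝ (Fin n)) (w : ℕ → EuclideanSpace ℝ (Fin n))
    (hwb : ∀ t, ‖w t‖ ≤ wmax)
    (hdyn : x e = f (x (e - 1)) (π (x (e - 1))) (w (e - 1)))
    (hcert : ∀ t, s < t → t ≤ e - 1 → ‖x t‖ ≤ κ * ρ ^ (t - s) * ‖x s‖ + β * wmax) :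
    ‖x e‖ ≤ Lf * (1 + Lπ) * κ * ρ ^ (e - 1 - s) * ‖x s‖
        + Lf * ((1 + Lπ) * β * wmax + wmax + pibar0) ∧
    ‖x e‖ ^ 2 ≤ 2 * Lf ^ 2 * (1 + Lπ) ^ 2 * κ ^ 2 * ρ ^ (2 * (e - 1 - s)) * ‖x s‖ ^ 2
        + 2 * Lf ^ 2 * ((1 + Lπ) * β * wmax + wmax + pibar0) ^ 2 ∧
    ‖x e‖ ^ 4 ≤ 8 * Lf ^ 4 * (1 + Lπ) ^ 4 * κ ^ 4 * ρ ^ (4 * (e - 1 - s)) * ‖x s‖ ^ 4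
        + 8 * Lf ^ 4 * ((1 + Lπ) * β * wmax + wmax + pibar0) ^ 4 := by
  have hwmax : 0 ≤ wmax := (norm_nonneg _).trans (hwb 0)
  have hprev : ‖x (e - 1)‖ ≤ κ * ρ ^ (e - 1 - s) * ‖x s‖ + β * wmax :=
    le_mul_pow_mul_add_of_forall_lt_of_le (a := fun t ↦ ‖x t‖) hκ (mul_nonneg hβ hwmax)
      (norm_nonneg _) hcert (by omega) le_rfl
  have hlin : ‖x e‖ ≤ Lf * (1 + Lπ) * κ * ρ ^ (e - 1 - s) * ‖x s‖
      + Lf * ((1 + Lπ) * β * wmax + wmax + pibar0) :=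
    calc ‖x e‖ ≤ Lf * ((1 + Lπ) * ‖x (e - 1)‖ + ‖w (e - 1)‖ + ‖π 0‖) :=
          hdyn ▸ norm_closed_loop_le (by linarith) hf hf0 hπ _ _
      _ ≤ Lf * ((1 + Lπ) * (κ * ρ ^ (e - 1 - s) * ‖x s‖ + β * wmax) + wmax + pibar0) := by
          have : 0 ≤ 1 + Lπ := by linarith
          gcongr
          exact hwb _
      _ = _ := by ring
  refine ⟨hlin, ?_, ?_⟩
  · exact (sq_le_two_mul_add_sq_of_le_add (norm_nonneg _) hlin).trans_eq (by ring)
  · exact (pow_four_le_eight_mul_add_pow_four_of_le_add (norm_nonneg _) hlin).trans_eq (by ring)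

/-- Bound on the state reached at the end of an early-terminated ('Break') episode:
the E-ISS certificate held up to time `e-1`, and the last step is only controlled
by the Lipschitz constants of the dynamics and the (possibly destabilizing) policy. -/
theorem break_state_bound (n m : ℕ) (Lf Lπ κ β wmax pibar0 ρ : ℝ)
    (hLf : 1 ≤ Lf) (hLπ : 1 ≤ Lπ) (hκ : 1 ≤ κ) (hβ : 0 ≤ β) (hw : 0 ≤ wmax)
    (hpibar0 : 0 ≤ pibar0) (hρ0 : 0 < ρ) (hρ1 : ρ < 1)
    (f : EuclideanSpace ℝ (Fin n) → EuclideanSpace ℝ (Fin m) → EuclideanSpace ℝ (Fin n)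
          → EuclideanSpace ℝ (Fin n))
    (hf : ∀ x u w x' u' w', ‖f x u w - f x' u' w'‖ ≤ Lf * (‖x - x'‖ + ‖u - u'‖ + ‖w - w'‖))
    (hf0 : f 0 0 0 = 0)
    (π : EuclideanSpace ℝ (Fin n) → EuclideanSpace ℝ (Fin m))
    (hπ : ∀ x y, ‖π x - π y‖ ≤ Lπ * ‖x - y‖) (hπ0 : ‖π 0‖ ≤ pibar0)
    (s e : ℕ) (hse : s < e)
    (x : ℕ → EuclideanSpace ℝ (Fin n)) (w : ℕ → EuclideanSpace ℝ (Fin n))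
    (hwb : ∀ t, ‖w t‖ ≤ wmax)
    (hdyn : x e = f (x (e - 1)) (π (x (e - 1))) (w (e - 1)))
    (hcert : ∀ t, s < t → t ≤ e - 1 → ‖x t‖ ≤ κ * ρ ^ (t - s) * ‖x s‖ + β * wmax) :
    ‖x e‖ ≤ Lf * (1 + Lπ) * κ * ρ ^ (e - 1 - s) * ‖x s‖
        + Lf * ((1 + Lπ) * β * wmax + wmax + pibar0) ∧
    ‖x e‖ ^ 2 ≤ 2 * Lf ^ 2 * (1 + Lπ) ^ 2 * κ ^ 2 * ρ ^ (2 * (e - 1 - s)) * ‖x s‖ ^ 2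
        + 2 * Lf ^ 2 * ((1 + Lπ) * β * wmax + wmax + pibar0) ^ 2 ∧
    ‖x e‖ ^ 4 ≤ 8 * Lf ^ 4 * (1 + Lπ) ^ 4 * κ ^ 4 * ρ ^ (4 * (e - 1 - s)) * ‖x s‖ ^ 4
        + 8 * Lf ^ 4 * ((1 + Lπ) * β * wmax + wmax + pibar0) ^ 4 :=
  break_state_bound_general n m Lf Lπ κ β wmax pibar0 ρ hLf hLπ hκ hβ f hf hf0 π hπ hπ0 s e hse x w
    hwb hdyn hcert
end

section
/- Let κ ≥ 1, L_f ≥ 1, L_π ≥ 1, 0 < ρ < 1, β ≥ 0, w_max ≥ 0, π̄0 ≥ 0, and an integer τ ≥ 1 with 2γ0² < 1 where γ0 := 2κ²ρ^{2τ}; set γ1 := 2L_f²(1+L_π)²κ², c := L_f((1+L_π)β w_max + w_max + π̄0), α8 := √(γ1/2)·β w_max/(1−κρ^τ) + c, and α9 := 2γ1 β² w_max²/(1−γ0) + 2c². Let p < q be natural numbers and y : ℕ → ℝ with y_j ≥ 0 for all j, y_{j+1} ≤ κρ^τ y_j + β w_max for all j with p ≤ j ≤ q−2, and y_q ≤ √(γ1/2)·y_{q−1}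 + c. Then y_q ≤ √(γ1/2)·(κρ^τ)^{q−1−p} y_p + α8 and y_q² ≤ γ1·γ0^{q−1−p} y_p² + α9. -/
/-!
Between the two Breaks, `y` obeys the contracting affine recursion `y' ≤ a y + b` with
`a = κρ^τ` (and `a < 1` because `2a² = γ0 < 1`), so
`y (q - 1) ≤ a ^ (q - 1 - p) y p + b / (1 - a)`, `b / (1 - a)` being the fixed point of the
recursion. Feeding this into the Break step gives the first bound. Squaring via
`(x + z)² ≤ 2x² + 2z²` turns both steps into affine recursions for `y²`, with contraction
`2a² = γ0` in the episodes and factor `2 (√(γ1/2))² = γ1` at the Break, and the same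
iteration gives the second bound.
-/

section

variable {K : Type*} [Field K] [LinearOrder K] [IsStrictOrderedRing K]

theorem le_pow_mul_add_div_of_affine_rec {a b : K} (ha0 : 0 ≤ a) (ha1 : a < 1) (hb : 0 ≤ b)
    {z : ℕ → K} {p : ℕ} :
    ∀ n, (∀ j, p ≤ j → j < p + n → z (j + 1) ≤ a * z j + b) →
      z (p + n) ≤ a ^ n * z p + b / (1 - a)
  | 0, _ => by
    simpa using div_nonneg hb (sub_nonneg.2 ha1.le)
  | n + 1, hrec => by
    have ih := le_pow_mul_add_div_of_affine_rec ha0 ha1 hb n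
      fun j hpj hjn => hrec j hpj (by omega)
    have hfix : a * (b / (1 - a)) + b = b / (1 - a) := by
      field_simp [(sub_pos.2 ha1).ne']
      ring
    calc z (p + (n + 1)) ≤ a * z (p + n) + b := hrec (p + n) (by omega) (by omega)
      _ ≤ a * (a ^ n * z p + b / (1 - a)) + b := by gcongr
      _ = a ^ (n + 1) * z p + (a * (b / (1 - a)) + b) := by ring
      _ = a ^ (n + 1) * z p + b / (1 - a) := by rw [hfix]

theorem sq_le_of_le_mul_add {u v a b : K} (hu : 0 ≤ u) (h : u ≤ a * v + b) :
    u ^ 2 ≤ 2 * a ^ 2 * v ^ 2 + 2 * b ^ 2 :=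
  calc u ^ 2 ≤ (a * v + b) ^ 2 := pow_le_pow_left₀ hu h 2
    _ ≤ 2 * ((a * v) ^ 2 + b ^ 2) := add_sq_le
    _ = 2 * a ^ 2 * v ^ 2 + 2 * b ^ 2 := by ring

end

theorem consecutive_breaks_bound_general (κ Lf Lπ ρ β wmax γ0 γ1 c α8 α9 : ℝ)
    (τ : ℕ) (hκ : 1 ≤ κ) (hρ0 : 0 < ρ)
    (hβ : 0 ≤ β) (hw : 0 ≤ wmax)
    (hγ0 : γ0 = 2 * κ ^ 2 * ρ ^ (2 * τ)) (hsmall : 2 * γ0 ^ 2 < 1)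
    (hγ1 : γ1 = 2 * Lf ^ 2 * (1 + Lπ) ^ 2 * κ ^ 2)
    (hα8 : α8 = Real.sqrt (γ1 / 2) * (β * wmax) / (1 - κ * ρ ^ τ) + c)
    (hα9 : α9 = 2 * γ1 * β ^ 2 * wmax ^ 2 / (1 - γ0) + 2 * c ^ 2)
    (p q : ℕ) (hpq : p < q) (y : ℕ → ℝ) (hy : ∀ j, 0 ≤ y j)
    (hrec : ∀ j, p ≤ j → j + 2 ≤ q → y (j + 1) ≤ κ * ρ ^ τ * y j + β * wmax)
    (hbreak : y q ≤ Real.sqrt (γ1 / 2) * y (q - 1) + c) :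
    y q ≤ Real.sqrt (γ1 / 2) * (κ * ρ ^ τ) ^ (q - 1 - p) * y p + α8 ∧
    y q ^ 2 ≤ γ1 * γ0 ^ (q - 1 - p) * y p ^ 2 + α9 := by
  set a := κ * ρ ^ τ
  set s := Real.sqrt (γ1 / 2)
  have hpq' : p + (q - 1 - p) = q - 1 := by omega
  have hγ0a : γ0 = 2 * a ^ 2 := by rw [hγ0, pow_mul]; ring
  have hγ0_lt : γ0 < 1 := by nlinarith
  have ha1 : a < 1 := by nlinarith
  have hs : 2 * s ^ 2 = γ1 := by
    rw [Real.sq_sqrt (by rw [hγ1]; positivity)]; ring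
  have hlin := le_pow_mul_add_div_of_affine_rec (by positivity) ha1 (by positivity) (q - 1 - p)
    fun j hpj hj => hrec j hpj (by omega)
  have hsq := le_pow_mul_add_div_of_affine_rec (hγ0a ▸ by positivity) hγ0_lt
    (by positivity : 0 ≤ 2 * (β * wmax) ^ 2) (z := fun j => y j ^ 2) (q - 1 - p)
    fun j hpj hj => hγ0a ▸ sq_le_of_le_mul_add (hy _) (hrec j hpj (by omega))
  rw [hpq'] at hlin hsq
  constructor
  · calc y q ≤ s * y (q - 1) + c := hbreak
      _ ≤ s * (a ^ (q - 1 - p) * y p + β * wmax / (1 - a)) + c := by gcongr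
      _ = s * a ^ (q - 1 - p) * y p + α8 := by rw [hα8]; ring
  · calc y q ^ 2 ≤ γ1 * y (q - 1) ^ 2 + 2 * c ^ 2 := hs ▸ sq_le_of_le_mul_add (hy q) hbreak
      _ ≤ γ1 * (γ0 ^ (q - 1 - p) * y p ^ 2 + 2 * (β * wmax) ^ 2 / (1 - γ0)) + 2 * c ^ 2 := by
        gcongr
        exact hs ▸ by positivity
      _ = γ1 * γ0 ^ (q - 1 - p) * y p ^ 2 + α9 := by rw [hα9]; ring

/-- Relation of episode-start state norms at two consecutive Break activations:
between the Breaks every episode satisfies the E-ISS recursion, and the final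
Break step is only controlled by the Lipschitz constants. -/
theorem consecutive_breaks_bound (κ Lf Lπ ρ β wmax pibar0 γ0 γ1 c α8 α9 : ℝ)
    (τ : ℕ) (hκ : 1 ≤ κ) (hLf : 1 ≤ Lf) (hLπ : 1 ≤ Lπ) (hρ0 : 0 < ρ) (hρ1 : ρ < 1)
    (hβ : 0 ≤ β) (hw : 0 ≤ wmax) (hpibar0 : 0 ≤ pibar0) (hτ : 1 ≤ τ)
    (hγ0 : γ0 = 2 * κ ^ 2 * ρ ^ (2 * τ)) (hsmall : 2 * γ0 ^ 2 < 1)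
    (hγ1 : γ1 = 2 * Lf ^ 2 * (1 + Lπ) ^ 2 * κ ^ 2)
    (hc : c = Lf * ((1 + Lπ) * β * wmax + wmax + pibar0))
    (hα8 : α8 = Real.sqrt (γ1 / 2) * (β * wmax) / (1 - κ * ρ ^ τ) + c)
    (hα9 : α9 = 2 * γ1 * β ^ 2 * wmax ^ 2 / (1 - γ0) + 2 * c ^ 2)
    (p q : ℕ) (hpq : p < q) (y : ℕ → ℝ) (hy : ∀ j, 0 ≤ y j)
    (hrec : ∀ j, p ≤ j → j + 2 ≤ q → y (j + 1) ≤ κ * ρ ^ τ * y j + β * wmax)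
    (hbreak : y q ≤ Real.sqrt (γ1 / 2) * y (q - 1) + c) :
    y q ≤ Real.sqrt (γ1 / 2) * (κ * ρ ^ τ) ^ (q - 1 - p) * y p + α8 ∧
    y q ^ 2 ≤ γ1 * γ0 ^ (q - 1 - p) * y p ^ 2 + α9 :=
  consecutive_breaks_bound_general κ Lf Lπ ρ β wmax γ0 γ1 c α8 α9 τ hκ hρ0 hβ hw hγ0 hsmall hγ1 hα8
    hα9 p q hpq y hy hrec hbreak
end

section
/- Let κ ≥ 1, L_f ≥ 1, L_π ≥ 1, 0 < ρ < 1, β ≥ 0, w_max ≥ 0, π̄0 ≥ 0, and an integer τ ≥ 1 with 2γ0² < 1 where γ0 := 2κ²ρ^{2τ}; set γ1 := 2L_f²(1+L_π)²κ² (so √(γ1/2) = L_f(1+L_π)κ > 1), c := L_f((1+L_π)β w_max + w_max + π̄0), and α8 := √(γ1/2)·β w_max/(1−κρ^τ) + c. Let J ≥ 1 and 𝕄 be natural numbers, let y : ℕ → ℝ satisfy y_j ≥ 0 for all j, and let B ⊆ {1,…,J−1} be a set with |B| ≤ 𝕄 such that for every j with 0 ≤ j ≤ J−2: if j+1 ∈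 B then y_{j+1} ≤ √(γ1/2)·y_j + c, and otherwise y_{j+1} ≤ κρ^τ y_j + β w_max. Then Σ_{j=0}^{J−1} y_j ≤ (1/(1−κρ^τ)) · ((√(γ1/2))^{𝕄+1} − 1)/(√(γ1/2) − 1) · (y_0 + α8/(√(γ1/2) − 1)) + β w_max · J/(1−κρ^τ). -/
/-!
Write `r = κ ρ^τ < 1`, `g = √(γ1/2) > 1`, `b = β w_max / (1 - r)` (the fixed point of the
E-ISS recursion) and `a = α8 / (g - 1)`, so that `(g - 1) a = g b + c`; let `A = y₀ + a` and let
`n_k` count the Breaks among the first `k` transitions. By induction `y_k ≤ g^{n_k} A - a + b`,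
and the choice of `a` absorbs the additive terms of a Break, after which even `y_k ≤ g^{n_k} A - a`.
The potential `Φ_k = (1 - r) ∑_{j ≤ k} y_j + r y_k` satisfies `Φ_{k+1} - Φ_k = y_{k+1} - r y_k`,
which is at most `β w_max` on a regular transition and at most `g^{n_{k+1}} A` on a Break, so
`(1 - r) ∑_j y_j ≤ Φ_{J-1} ≤ (1 + g + ⋯ + g^𝕄) A + β w_max J`.
-/

open Finset

lemma card_inter_Ioc_succ_of_mem {B : Finset ℕ} {k : ℕ} (h : k + 1 ∈ B) :
    #(B ∩ Ioc 0 (k + 1)) = #(B ∩ Ioc 0 k) + 1 := by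
  rw [← insert_Ioc_right_eq_Ioc_add_one k.zero_le, inter_insert_of_mem h,
    card_insert_of_notMem (by simp)]

lemma card_inter_Ioc_succ_of_notMem {B : Finset ℕ} {k : ℕ} (h : k + 1 ∉ B) :
    #(B ∩ Ioc 0 (k + 1)) = #(B ∩ Ioc 0 k) := by
  rw [← insert_Ioc_right_eq_Ioc_add_one k.zero_le, inter_insert_of_notMem h]

lemma le_pow_succ_mul_sub_of_le_mul_add {g a b c A x x' : ℝ} {n : ℕ} (hg : 0 ≤ g)
    (hgbc : g * b + c ≤ (g - 1) * a) (hx : x ≤ g ^ n * A - a + b) (hx' : x' ≤ g * x + c) :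
    x' ≤ g ^ (n + 1) * A - a := by
  have := mul_le_mul_of_nonneg_left hx hg
  rw [pow_succ]
  linarith

def IsSwitchedRecursion (r g c w : ℝ) (B : Finset ℕ) (J : ℕ) (y : ℕ → ℝ) : Prop :=
  ∀ j, j + 2 ≤ J →
    (j + 1 ∈ B → y (j + 1) ≤ g * y j + c) ∧ (j + 1 ∉ B → y (j + 1) ≤ r * y j + w)

namespace IsSwitchedRecursion

variable {r g a b c w : ℝ} {B : Finset ℕ} {J : ℕ} {y : ℕ → ℝ}

theorem le_pow_card_mul_sub_add (h : IsSwitchedRecursion r g c w B J y)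
    (hr0 : 0 ≤ r) (hr1 : r ≤ 1) (hg : 1 ≤ g) (ha : 0 ≤ a) (hb : 0 ≤ b) (hy0 : 0 ≤ y 0)
    (hwb : w ≤ (1 - r) * b) (hgbc : g * b + c ≤ (g - 1) * a) :
    ∀ k, k + 1 ≤ J → y k ≤ g ^ #(B ∩ Ioc 0 k) * (y 0 + a) - a + b := by
  intro k
  induction k with
  | zero => intro; simp [hb]
  | succ k ih =>
    intro hk
    have ih := ih (by omega)
    obtain ⟨hbreak, hregular⟩ := h k (by omega)
    have henv : 0 ≤ g ^ #(B ∩ Ioc 0 k) * (y 0 + a) - a := by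
      nlinarith [one_le_pow₀ (n := #(B ∩ Ioc 0 k)) hg]
    by_cases hk1 : k + 1 ∈ B
    · rw [card_inter_Ioc_succ_of_mem hk1]
      linarith [le_pow_succ_mul_sub_of_le_mul_add (by linarith) hgbc ih (hbreak hk1)]
    · rw [card_inter_Ioc_succ_of_notMem hk1]
      nlinarith [hregular hk1, mul_le_mul_of_nonneg_left ih hr0]

theorem potential_le (h : IsSwitchedRecursion r g c w B J y)
    (hr0 : 0 ≤ r) (hr1 : r ≤ 1) (hg : 1 ≤ g) (ha : 0 ≤ a) (hb : 0 ≤ b) (hw : 0 ≤ w)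
    (hy : ∀ j, 0 ≤ y j) (hwb : w ≤ (1 - r) * b) (hgbc : g * b + c ≤ (g - 1) * a) :
    ∀ k, k + 1 ≤ J → (1 - r) * ∑ j ∈ range (k + 1), y j + r * y k
      ≤ (∑ i ∈ range (#(B ∩ Ioc 0 k) + 1), g ^ i) * (y 0 + a) + w * (k + 1) := by
  intro k
  induction k with
  | zero =>
    intro
    simp only [Ioc_self, inter_empty, card_empty, zero_add, sum_range_one, pow_zero, one_mul,
      Nat.cast_zero]
    linarith
  | succ k ih =>
    intro hk
    have ih := ih (by omega)
    obtain ⟨hbreak, hregular⟩ := h k (by omega)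
    have hryk := mul_nonneg hr0 (hy k)
    rw [sum_range_succ]
    push_cast
    by_cases hk1 : k + 1 ∈ B
    · have hjump := le_pow_succ_mul_sub_of_le_mul_add (by linarith) hgbc
        (h.le_pow_card_mul_sub_add hr0 hr1 hg ha hb (hy 0) hwb hgbc k (by omega)) (hbreak hk1)
      rw [card_inter_Ioc_succ_of_mem hk1, sum_range_succ (fun i => g ^ i)]
      linarith
    · rw [card_inter_Ioc_succ_of_notMem hk1]
      linarith [hregular hk1]

theorem sum_le (h : IsSwitchedRecursion r g c w B J y)
    (hr0 : 0 ≤ r) (hr1 : r ≤ 1) (hg : 1 ≤ g) (ha : 0 ≤ a) (hb : 0 ≤ b) (hw : 0 ≤ w)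
    (hy : ∀ j, 0 ≤ y j) (hwb : w ≤ (1 - r) * b) (hgbc : g * b + c ≤ (g - 1) * a)
    (hJ : 1 ≤ J) {M : ℕ} (hBM : #B ≤ M) :
    (1 - r) * ∑ j ∈ range J, y j ≤ (∑ i ∈ range (M + 1), g ^ i) * (y 0 + a) + w * J := by
  obtain ⟨k, rfl⟩ : ∃ k, J = k + 1 := ⟨J - 1, by omega⟩
  have hΦ := h.potential_le hr0 hr1 hg ha hb hw hy hwb hgbc k le_rfl
  have hgeom : ∑ i ∈ range (#(B ∩ Ioc 0 k) + 1), g ^ i ≤ ∑ i ∈ range (M + 1), g ^ i :=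
    sum_le_sum_of_subset_of_nonneg
      (range_subset_range.2 (by grw [card_le_card inter_subset_left, hBM]))
      (fun i _ _ => by positivity)
  push_cast
  have hA : 0 ≤ y 0 + a := by linarith [hy 0]
  linarith [mul_nonneg hr0 (hy k), mul_le_mul_of_nonneg_right hgeom hA]

end IsSwitchedRecursion

theorem sum_episode_starts_bound_general (κ Lf Lπ ρ β wmax pibar0 γ1 c α8 : ℝ) (τ : ℕ)
    (hκ : 1 ≤ κ) (hLf : 1 ≤ Lf) (hLπ : 1 ≤ Lπ) (hρ0 : 0 < ρ)
    (hβ : 0 ≤ β) (hw : 0 ≤ wmax) (hpibar0 : 0 ≤ pibar0)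
    (hsmall : 2 * (2 * κ ^ 2 * ρ ^ (2 * τ)) ^ 2 < 1)
    (hγ1 : γ1 = 2 * Lf ^ 2 * (1 + Lπ) ^ 2 * κ ^ 2)
    (hc : c = Lf * ((1 + Lπ) * β * wmax + wmax + pibar0))
    (hα8 : α8 = Real.sqrt (γ1 / 2) * (β * wmax) / (1 - κ * ρ ^ τ) + c)
    (J 𝕄 : ℕ) (hJ : 1 ≤ J) (y : ℕ → ℝ) (hy : ∀ j, 0 ≤ y j)
    (B : Finset ℕ) (hBcard : B.card ≤ 𝕄)
    (hstep : ∀ j, j + 2 ≤ J →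
      (j + 1 ∈ B → y (j + 1) ≤ Real.sqrt (γ1 / 2) * y j + c) ∧
      (j + 1 ∉ B → y (j + 1) ≤ κ * ρ ^ τ * y j + β * wmax)) :
    ∑ j ∈ Finset.range J, y j
      ≤ 1 / (1 - κ * ρ ^ τ)
          * ((Real.sqrt (γ1 / 2) ^ (𝕄 + 1) - 1) / (Real.sqrt (γ1 / 2) - 1))
          * (y 0 + α8 / (Real.sqrt (γ1 / 2) - 1))
        + β * wmax * (J : ℝ) / (1 - κ * ρ ^ τ) := by
  have hg : Real.sqrt (γ1 / 2) = Lf * (1 + Lπ) * κ := by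
    rw [hγ1, show 2 * Lf ^ 2 * (1 + Lπ) ^ 2 * κ ^ 2 / 2 = (Lf * (1 + Lπ) * κ) ^ 2 by ring,
      Real.sqrt_sq (by positivity)]
  set g := Real.sqrt (γ1 / 2)
  set r := κ * ρ ^ τ
  have hg1 : 1 < g := by
    have : 2 ≤ Lf * (1 + Lπ) := by nlinarith
    rw [hg]; nlinarith
  have hr0 : 0 ≤ r := by positivity
  have hr1 : r < 1 := by
    rw [show 2 * κ ^ 2 * ρ ^ (2 * τ) = 2 * r ^ 2 by ring] at hsmall
    exact (pow_lt_one_iff_of_nonneg hr0 (n := 4) (by norm_num)).1 (by nlinarith)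
  have h1r : 0 < 1 - r := by linarith
  have hc0 : 0 ≤ c := by
    rw [hc]
    exact mul_nonneg (by linarith) (by nlinarith [mul_nonneg hβ hw])
  have hb : 0 ≤ β * wmax / (1 - r) := div_nonneg (mul_nonneg hβ hw) h1r.le
  have hα0 : 0 ≤ α8 := by
    rw [hα8, mul_div_assoc]
    exact add_nonneg (mul_nonneg (by linarith) hb) hc0
  have hgbc : g * (β * wmax / (1 - r)) + c = (g - 1) * (α8 / (g - 1)) := by
    rw [mul_div_cancel₀ _ (by linarith), hα8]
    ring
  have key := IsSwitchedRecursion.sum_le hstep hr0 hr1.le hg1.le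
    (div_nonneg hα0 (by linarith)) hb (mul_nonneg hβ hw) hy
    (mul_div_cancel₀ _ h1r.ne').ge hgbc.le hJ hBcard
  rw [geom_sum_eq hg1.ne'] at key
  calc ∑ j ∈ range J, y j
      ≤ ((g ^ (𝕄 + 1) - 1) / (g - 1) * (y 0 + α8 / (g - 1)) + β * wmax * J) / (1 - r) :=
        (le_div_iff₀ h1r).2 (by linarith)
    _ = _ := by ring

/-- Bound on the sum of episode-start state norms for the switching algorithm:
transitions into episodes in `B` (Breaks, at most 𝕄 of them) only satisfy the
Lipschitz-type bound, while all other transitions satisfy the E-ISS recursion. -/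
theorem sum_episode_starts_bound (κ Lf Lπ ρ β wmax pibar0 γ1 c α8 : ℝ) (τ : ℕ)
    (hκ : 1 ≤ κ) (hLf : 1 ≤ Lf) (hLπ : 1 ≤ Lπ) (hρ0 : 0 < ρ) (hρ1 : ρ < 1)
    (hβ : 0 ≤ β) (hw : 0 ≤ wmax) (hpibar0 : 0 ≤ pibar0) (hτ : 1 ≤ τ)
    (hsmall : 2 * (2 * κ ^ 2 * ρ ^ (2 * τ)) ^ 2 < 1)
    (hγ1 : γ1 = 2 * Lf ^ 2 * (1 + Lπ) ^ 2 * κ ^ 2)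
    (hc : c = Lf * ((1 + Lπ) * β * wmax + wmax + pibar0))
    (hα8 : α8 = Real.sqrt (γ1 / 2) * (β * wmax) / (1 - κ * ρ ^ τ) + c)
    (J 𝕄 : ℕ) (hJ : 1 ≤ J) (y : ℕ → ℝ) (hy : ∀ j, 0 ≤ y j)
    (B : Finset ℕ) (hB : B ⊆ Finset.Icc 1 (J - 1)) (hBcard : B.card ≤ 𝕄)
    (hstep : ∀ j, j + 2 ≤ J →
      (j + 1 ∈ B → y (j + 1) ≤ Real.sqrt (γ1 / 2) * y j + c) ∧
      (j + 1 ∉ B → y (j + 1) ≤ κ * ρ ^ τ * y j + β * wmax)) :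
    ∑ j ∈ Finset.range J, y j
      ≤ 1 / (1 - κ * ρ ^ τ)
          * ((Real.sqrt (γ1 / 2) ^ (𝕄 + 1) - 1) / (Real.sqrt (γ1 / 2) - 1))
          * (y 0 + α8 / (Real.sqrt (γ1 / 2) - 1))
        + β * wmax * (J : ℝ) / (1 - κ * ρ ^ τ) :=
  sum_episode_starts_bound_general κ Lf Lπ ρ β wmax pibar0 γ1 c α8 τ hκ hLf hLπ hρ0 hβ hw hpibar0
    hsmall hγ1 hc hα8 J 𝕄 hJ y hy B hBcard hstep
end

section
/- Let κ ≥ 1, L_f ≥ 1, L_π ≥ 1, 0 < ρ < 1, β ≥ 0, w_max ≥ 0, π̄0 ≥ 0, and an integer τ ≥ 1 with 2γ0² < 1 where γ0 := 2κ²ρ^{2τ}; set γ1 := 2L_f²(1+L_π)²κ², c := L_f((1+L_π)β w_max + w_max + π̄0), α9 := 2γ1 β² w_max²/(1−γ0) + 2c², and α10 := 8c⁴ + 16γ1² β⁴ w_max⁴/(1−2γ0²). Let J ≥ 1 and 𝕄 be natural numbers, let y : ℕ → ℝ satisfy y_j ≥ 0 for all j, and let B ⊆ {1,…,J−1} be a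 set with |B| ≤ 𝕄 such that for every j with 0 ≤ j ≤ J−2: if j+1 ∈ B then y_{j+1} ≤ √(γ1/2)·y_j + c, and otherwise y_{j+1} ≤ κρ^τ y_j + β w_max. Then Σ_{j=0}^{J−1} y_j² ≤ (1/(1−γ0)) · (γ1^{𝕄+1} − 1)/(γ1 − 1) · (y_0² + α9/(γ1 − 1)) + 2β² w_max² · J/(1−γ0), and Σ_{j=0}^{J−1} y_j⁴ ≤ (1/(1−2γ0²)) · ((2γ1²)^{𝕄+1} − 1)/(2γ1² − 1) · (y_0⁴ + α10/(2γ1² − 1)) + 8β⁴ w_max⁴ · J/(1−2γ0²). -/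
/-!
Let `z (j + 1) ≤ g₀ z j + d` off breaks and `z (j + 1) ≤ g₁ z j + e` at breaks. The excess
`v j = max (z j - D) 0` over the fixed point `D = d / (1 - g₀)` contracts by `g₀` between breaks,
while for `K = (g₁ D + e) / (g₁ - 1)` a break multiplies `v + K` by at most `g₁`; so after `m`
breaks `v + K ≤ g₁ ^ m (v 0 + K)`. The potential `(1 - g₀) ∑_{i<n} v i + v n` does not increase
along contracting steps and grows by at most this envelope at a break; with at most `𝕄` breaks
this gives the geometric sum `∑_{k ≤ 𝕄} g₁ ^ k`. Squares and fourth powers of `y` satisfy such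
affine recursions by `(a + b) ^ n ≤ 2 ^ (n - 1) (a ^ n + b ^ n)` for even `n`.
-/

section SwitchingRecursion

open Finset

def breakCount (B : Finset ℕ) (n : ℕ) : ℕ := #{j ∈ range n | j + 1 ∈ B}

variable {B : Finset ℕ} {n N M : ℕ} {g₀ g₁ K : ℝ} {v : ℕ → ℝ}

lemma breakCount_succ_of_mem (h : n + 1 ∈ B) : breakCount B (n + 1) = breakCount B n + 1 := by
  rw [breakCount, range_add_one, filter_insert, if_pos h, card_insert_of_notMem (by simp)]
  rfl

lemma breakCount_succ_of_notMem (h : n + 1 ∉ B) : breakCount B (n + 1) = breakCount B n := by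
  rw [breakCount, range_add_one, filter_insert, if_neg h]
  rfl

lemma breakCount_le_card : breakCount B n ≤ #B :=
  card_le_card_of_injOn (· + 1) (fun _ hj => (mem_filter.1 hj).2)
    (fun _ _ _ _ h => Nat.succ_injective h)

lemma add_le_pow_breakCount_mul (hv : ∀ j, 0 ≤ v j) (hg₀ : g₀ ≤ 1) (hg₁ : 0 ≤ g₁)
    (hbreak : ∀ j, j + 1 < N → j + 1 ∈ B → v (j + 1) + K ≤ g₁ * (v j + K))
    (hdecay : ∀ j, j + 1 < N → j + 1 ∉ B → v (j + 1) ≤ g₀ * v j) :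
    ∀ n < N, v n + K ≤ g₁ ^ breakCount B n * (v 0 + K) := by
  intro n hn
  induction n with
  | zero => simp [breakCount]
  | succ n ih =>
    have ih := ih (by omega)
    by_cases hb : n + 1 ∈ B
    · rw [breakCount_succ_of_mem hb, pow_succ', mul_assoc]
      exact (hbreak n hn hb).trans (by gcongr)
    · rw [breakCount_succ_of_notMem hb]
      have := (hdecay n hn hb).trans (mul_le_of_le_one_left (hv n) hg₀)
      linarith

lemma potential_le_geom_sum_mul (hv : ∀ j, 0 ≤ v j) (hg₀ : 0 ≤ g₀) (hg₀_le : g₀ ≤ 1)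
    (hg₁ : 0 ≤ g₁) (hK : 0 ≤ K)
    (hbreak : ∀ j, j + 1 < N → j + 1 ∈ B → v (j + 1) + K ≤ g₁ * (v j + K))
    (hdecay : ∀ j, j + 1 < N → j + 1 ∉ B → v (j + 1) ≤ g₀ * v j) :
    ∀ n < N, (1 - g₀) * ∑ i ∈ range n, v i + v n
      ≤ (∑ k ∈ range (breakCount B n + 1), g₁ ^ k) * (v 0 + K) := by
  intro n hn
  induction n with
  | zero => simp [breakCount, hK]
  | succ n ih =>
    have ih := ih (by omega)
    rw [sum_range_succ]
    by_cases hb : n + 1 ∈ B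
    · have henv := add_le_pow_breakCount_mul hv hg₀_le hg₁ hbreak hdecay (n + 1) hn
      rw [breakCount_succ_of_mem hb] at henv ⊢
      rw [sum_range_succ _ (breakCount B n + 1)]
      linear_combination ih + henv + mul_nonneg hg₀ (hv n) + hK
    · rw [breakCount_succ_of_notMem hb]
      linear_combination ih + hdecay n hn hb

theorem sum_le_geom_sum_mul_of_switching (hv : ∀ j, 0 ≤ v j) (hg₀ : 0 ≤ g₀) (hg₀_le : g₀ ≤ 1)
    (hg₁ : 0 ≤ g₁) (hK : 0 ≤ K) (hBM : #B ≤ M)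
    (hbreak : ∀ j, j + 1 < N → j + 1 ∈ B → v (j + 1) + K ≤ g₁ * (v j + K))
    (hdecay : ∀ j, j + 1 < N → j + 1 ∉ B → v (j + 1) ≤ g₀ * v j) :
    (1 - g₀) * ∑ i ∈ range N, v i ≤ (∑ k ∈ range (M + 1), g₁ ^ k) * (v 0 + K) := by
  have hW : 0 ≤ v 0 + K := add_nonneg (hv 0) hK
  rcases N with _ | n
  · simpa using mul_nonneg (sum_nonneg fun k _ => pow_nonneg hg₁ k) hW
  have hpot := potential_le_geom_sum_mul hv hg₀ hg₀_le hg₁ hK hbreak hdecay n (lt_add_one n)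
  have hmono : ∑ k ∈ range (breakCount B n + 1), g₁ ^ k ≤ ∑ k ∈ range (M + 1), g₁ ^ k :=
    sum_le_sum_of_subset_of_nonneg
      (range_subset_range.2 (by have := breakCount_le_card (B := B) (n := n); omega))
      (fun k _ _ => pow_nonneg hg₁ k)
  rw [sum_range_succ]
  calc (1 - g₀) * (∑ i ∈ range n, v i + v n) ≤ (1 - g₀) * ∑ i ∈ range n, v i + v n := by
        linear_combination mul_nonneg hg₀ (hv n)
    _ ≤ _ := hpot
    _ ≤ _ := by gcongr

lemma max_sub_le_mul_max_sub_of_le_mul_add {z z' d D : ℝ} (hg₀ : 0 ≤ g₀)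
    (hD : g₀ * D + d = D) (h : z' ≤ g₀ * z + d) : max (z' - D) 0 ≤ g₀ * max (z - D) 0 :=
  max_le (by nlinarith [le_max_left (z - D) 0]) (mul_nonneg hg₀ (le_max_right _ _))

lemma max_sub_add_le_mul_max_sub_add_of_le_mul_add {z z' e D : ℝ} (hg₁ : 0 ≤ g₁) (hD : 0 ≤ D)
    (he : 0 ≤ e) (hK : g₁ * D + e + K = g₁ * K) (h : z' ≤ g₁ * z + e) :
    max (z' - D) 0 + K ≤ g₁ * (max (z - D) 0 + K) := by
  have : max (z' - D) 0 ≤ g₁ * max (z - D) 0 + (g₁ * D + e) :=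
    max_le (by nlinarith [le_max_left (z - D) 0]) (by positivity)
  linear_combination this + hK

theorem sum_le_of_switching_affine {z : ℕ → ℝ} {d e : ℝ} (hz₀ : 0 ≤ z 0) (hg₀ : 0 ≤ g₀)
    (hg₀_lt : g₀ < 1) (hg₁ : 1 < g₁) (hd : 0 ≤ d) (he : 0 ≤ e) (hBM : #B ≤ M)
    (hbreak : ∀ j, j + 1 < N → j + 1 ∈ B → z (j + 1) ≤ g₁ * z j + e)
    (hdecay : ∀ j, j + 1 < N → j + 1 ∉ B → z (j + 1) ≤ g₀ * z j + d) :
    ∑ j ∈ range N, z j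
      ≤ 1 / (1 - g₀) * ((g₁ ^ (M + 1) - 1) / (g₁ - 1))
          * (z 0 + (g₁ * d / (1 - g₀) + e) / (g₁ - 1)) + d * N / (1 - g₀) := by
  have h1g₀ : 0 < 1 - g₀ := by linarith
  have hg₁1 : 0 < g₁ - 1 := by linarith
  set D := d / (1 - g₀) with hD_def
  set K := (g₁ * D + e) / (g₁ - 1) with hK_def
  have hD : 0 ≤ D := by positivity
  have hD_fixed : g₀ * D + d = D := by rw [hD_def]; field_simp; ring
  have hK_fixed : g₁ * D + e + K = g₁ * K := by rw [hK_def]; field_simp; ring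
  set v : ℕ → ℝ := fun j => max (z j - D) 0
  have hv_sum := sum_le_geom_sum_mul_of_switching (g₁ := g₁) (v := v) (K := K)
    (fun j => le_max_right _ _) hg₀ hg₀_lt.le (by linarith) (by positivity) hBM
    (fun j hj hb => max_sub_add_le_mul_max_sub_add_of_le_mul_add (by linarith) hD he hK_fixed
      (hbreak j hj hb))
    (fun j hj hb => max_sub_le_mul_max_sub_of_le_mul_add hg₀ hD_fixed (hdecay j hj hb))
  rw [geom_sum_eq hg₁.ne'] at hv_sum
  have hz_sum : ∑ j ∈ range N, z j ≤ ∑ j ∈ range N, v j + D * N := by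
    simpa [sum_add_distrib, mul_comm] using
      sum_le_sum fun j (_ : j ∈ range N) => show z j ≤ v j + D by linarith [le_max_left (z j - D) 0]
  have hv₀ : v 0 ≤ z 0 := max_le (by linarith) hz₀
  have hG : 0 ≤ (g₁ ^ (M + 1) - 1) / (g₁ - 1) :=
    div_nonneg (by linarith [one_le_pow₀ (n := M + 1) hg₁.le]) hg₁1.le
  calc ∑ j ∈ range N, z j ≤ ∑ j ∈ range N, v j + D * N := hz_sum
    _ ≤ (g₁ ^ (M + 1) - 1) / (g₁ - 1) * (v 0 + K) / (1 - g₀) + D * N := by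
        gcongr
        rw [le_div_iff₀ h1g₀]
        linarith
    _ ≤ (g₁ ^ (M + 1) - 1) / (g₁ - 1) * (z 0 + K) / (1 - g₀) + D * N := by gcongr
    _ = _ := by rw [hK_def, hD_def]; ring

lemma pow_le_two_pow_mul_add_of_le_mul_add {n : ℕ} (hn : Even n) {x y a b : ℝ} (hx : 0 ≤ x)
    (h : x ≤ a * y + b) : x ^ n ≤ 2 ^ (n - 1) * a ^ n * y ^ n + 2 ^ (n - 1) * b ^ n := by
  have := (pow_le_pow_left₀ hx h n).trans hn.add_pow_le
  rw [mul_pow] at this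
  linear_combination this

theorem sum_pow_le_of_switching {n : ℕ} (hn : Even n) {y : ℕ → ℝ} {a₀ a₁ b₀ b₁ : ℝ}
    (hy : ∀ j, 0 ≤ y j) (ha₀ : 2 ^ (n - 1) * a₀ ^ n = g₀) (ha₁ : 2 ^ (n - 1) * a₁ ^ n = g₁)
    (hg₀ : g₀ < 1) (hg₁ : 1 < g₁) (hBM : #B ≤ M)
    (hbreak : ∀ j, j + 1 < N → j + 1 ∈ B → y (j + 1) ≤ a₁ * y j + b₁)
    (hdecay : ∀ j, j + 1 < N → j + 1 ∉ B → y (j + 1) ≤ a₀ * y j + b₀) :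
    ∑ j ∈ range N, y j ^ n
      ≤ 1 / (1 - g₀) * ((g₁ ^ (M + 1) - 1) / (g₁ - 1))
          * (y 0 ^ n + (g₁ * (2 ^ (n - 1) * b₀ ^ n) / (1 - g₀) + 2 ^ (n - 1) * b₁ ^ n) / (g₁ - 1))
        + 2 ^ (n - 1) * b₀ ^ n * N / (1 - g₀) := by
  have h2 : (0 : ℝ) ≤ 2 ^ (n - 1) := by positivity
  refine sum_le_of_switching_affine (hn.pow_nonneg _) (ha₀ ▸ mul_nonneg h2 (hn.pow_nonneg _))
    hg₀ hg₁ (mul_nonneg h2 (hn.pow_nonneg _)) (mul_nonneg h2 (hn.pow_nonneg _)) hBM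
    (fun j hj hb => ?_) (fun j hj hb => ?_)
  · rw [← ha₁]
    exact pow_le_two_pow_mul_add_of_le_mul_add hn (hy _) (hbreak j hj hb)
  · rw [← ha₀]
    exact pow_le_two_pow_mul_add_of_le_mul_add hn (hy _) (hdecay j hj hb)

end SwitchingRecursion

theorem sum_episode_starts_sq_quartic_bound_general
    (κ Lf Lπ ρ β wmax γ0 γ1 c α9 α10 : ℝ) (τ : ℕ)
    (hκ : 1 ≤ κ) (hLf : 1 ≤ Lf) (hLπ : 1 ≤ Lπ)
    (hγ0 : γ0 = 2 * κ ^ 2 * ρ ^ (2 * τ)) (hsmall : 2 * γ0 ^ 2 < 1)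
    (hγ1 : γ1 = 2 * Lf ^ 2 * (1 + Lπ) ^ 2 * κ ^ 2)
    (hα9 : α9 = 2 * γ1 * β ^ 2 * wmax ^ 2 / (1 - γ0) + 2 * c ^ 2)
    (hα10 : α10 = 8 * c ^ 4 + 16 * γ1 ^ 2 * β ^ 4 * wmax ^ 4 / (1 - 2 * γ0 ^ 2))
    (J 𝕄 : ℕ) (y : ℕ → ℝ) (hy : ∀ j, 0 ≤ y j)
    (B : Finset ℕ) (hBcard : B.card ≤ 𝕄)
    (hstep : ∀ j, j + 2 ≤ J →
      (j + 1 ∈ B → y (j + 1) ≤ Real.sqrt (γ1 / 2) * y j + c) ∧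
      (j + 1 ∉ B → y (j + 1) ≤ κ * ρ ^ τ * y j + β * wmax)) :
    (∑ j ∈ Finset.range J, y j ^ 2
      ≤ 1 / (1 - γ0) * ((γ1 ^ (𝕄 + 1) - 1) / (γ1 - 1)) * (y 0 ^ 2 + α9 / (γ1 - 1))
        + 2 * β ^ 2 * wmax ^ 2 * (J : ℝ) / (1 - γ0)) ∧
    (∑ j ∈ Finset.range J, y j ^ 4
      ≤ 1 / (1 - 2 * γ0 ^ 2)
          * (((2 * γ1 ^ 2) ^ (𝕄 + 1) - 1) / (2 * γ1 ^ 2 - 1))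
          * (y 0 ^ 4 + α10 / (2 * γ1 ^ 2 - 1))
        + 8 * β ^ 4 * wmax ^ 4 * (J : ℝ) / (1 - 2 * γ0 ^ 2)) := by
  have hdecay_gain : (κ * ρ ^ τ) ^ 2 = γ0 / 2 := by rw [hγ0, mul_comm 2 τ, pow_mul]; ring
  have hbreak_gain : Real.sqrt (γ1 / 2) ^ 2 = γ1 / 2 := Real.sq_sqrt (by rw [hγ1]; positivity)
  have hγ0_lt_one : γ0 < 1 := by nlinarith
  have hγ1_gt_one : 1 < γ1 := by
    have : 1 ≤ Lf ^ 2 * (1 + Lπ) ^ 2 * κ ^ 2 := one_le_mul_of_one_le_of_one_le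
      (one_le_mul_of_one_le_of_one_le (one_le_pow₀ hLf) (one_le_pow₀ (by linarith)))
      (one_le_pow₀ hκ)
    linarith
  have hbreak (j) (hj : j + 1 < J) := (hstep j hj).1
  have hdecay (j) (hj : j + 1 < J) := (hstep j hj).2
  constructor
  · refine (sum_pow_le_of_switching even_two hy ?_ ?_ hγ0_lt_one hγ1_gt_one hBcard hbreak
      hdecay).trans_eq ?_
    · rw [hdecay_gain]; ring
    · rw [hbreak_gain]; ring
    · rw [hα9]; ring
  · refine (sum_pow_le_of_switching (n := 4) ⟨2, rfl⟩ hy ?_ ?_ hsmall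
      (by nlinarith : (1 : ℝ) < 2 * γ1 ^ 2) hBcard hbreak hdecay).trans_eq ?_
    · rw [show (κ * ρ ^ τ) ^ 4 = ((κ * ρ ^ τ) ^ 2) ^ 2 by ring, hdecay_gain]; ring
    · rw [show Real.sqrt (γ1 / 2) ^ 4 = (Real.sqrt (γ1 / 2) ^ 2) ^ 2 by ring, hbreak_gain]; ring
    · rw [hα10]; ring

/-- Bounds on the sums of squares and fourth powers of episode-start state norms
for the switching algorithm: transitions into episodes in `B` (Breaks, at most 𝕄
of them) only satisfy the Lipschitz-type bound, all others the E-ISS recursion. -/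
theorem sum_episode_starts_sq_quartic_bound
    (κ Lf Lπ ρ β wmax pibar0 γ0 γ1 c α9 α10 : ℝ) (τ : ℕ)
    (hκ : 1 ≤ κ) (hLf : 1 ≤ Lf) (hLπ : 1 ≤ Lπ) (hρ0 : 0 < ρ) (hρ1 : ρ < 1)
    (hβ : 0 ≤ β) (hw : 0 ≤ wmax) (hpibar0 : 0 ≤ pibar0) (hτ : 1 ≤ τ)
    (hγ0 : γ0 = 2 * κ ^ 2 * ρ ^ (2 * τ)) (hsmall : 2 * γ0 ^ 2 < 1)
    (hγ1 : γ1 = 2 * Lf ^ 2 * (1 + Lπ) ^ 2 * κ ^ 2)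
    (hc : c = Lf * ((1 + Lπ) * β * wmax + wmax + pibar0))
    (hα9 : α9 = 2 * γ1 * β ^ 2 * wmax ^ 2 / (1 - γ0) + 2 * c ^ 2)
    (hα10 : α10 = 8 * c ^ 4 + 16 * γ1 ^ 2 * β ^ 4 * wmax ^ 4 / (1 - 2 * γ0 ^ 2))
    (J 𝕄 : ℕ) (hJ : 1 ≤ J) (y : ℕ → ℝ) (hy : ∀ j, 0 ≤ y j)
    (B : Finset ℕ) (hB : B ⊆ Finset.Icc 1 (J - 1)) (hBcard : B.card ≤ 𝕄)
    (hstep : ∀ j, j + 2 ≤ J →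
      (j + 1 ∈ B → y (j + 1) ≤ Real.sqrt (γ1 / 2) * y j + c) ∧
      (j + 1 ∉ B → y (j + 1) ≤ κ * ρ ^ τ * y j + β * wmax)) :
    (∑ j ∈ Finset.range J, y j ^ 2
      ≤ 1 / (1 - γ0) * ((γ1 ^ (𝕄 + 1) - 1) / (γ1 - 1)) * (y 0 ^ 2 + α9 / (γ1 - 1))
        + 2 * β ^ 2 * wmax ^ 2 * (J : ℝ) / (1 - γ0)) ∧
    (∑ j ∈ Finset.range J, y j ^ 4
      ≤ 1 / (1 - 2 * γ0 ^ 2)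
          * (((2 * γ1 ^ 2) ^ (𝕄 + 1) - 1) / (2 * γ1 ^ 2 - 1))
          * (y 0 ^ 4 + α10 / (2 * γ1 ^ 2 - 1))
        + 8 * β ^ 4 * wmax ^ 4 * (J : ℝ) / (1 - 2 * γ0 ^ 2)) :=
  sum_episode_starts_sq_quartic_bound_general κ Lf Lπ ρ β wmax γ0 γ1 c α9 α10 τ hκ hLf hLπ hγ0
    hsmall hγ1 hα9 hα10 J 𝕄 y hy B hBcard hstep
end

section
/- Let L_f ≥ 1, L_π ≥ 1, κ ≥ 1, β ≥ 1, 0 < ρ < 1, w_max ≥ 0, π̄0 ≥ 0 and an integer τ ≥ 1 with 2√2·κ·ρ^τ ≤ 1. Let f : ℝ^n × ℝ^m × ℝ^n → ℝ^n satisfy ‖f(x,u,w) − f(x',u',w')‖ ≤ L_f(‖x−x'‖+‖u−u'‖+‖w−w'‖) for all arguments and f(0,0,0) = 0; for each t let π_t : ℝ^n → ℝ^m be L_π-Lipschitz with ‖π_t(0)‖ ≤ π̄0; let ‖w_t‖ ≤ w_max for all t and x_{t+1} = f(x_t, π_t(x_t), w_t) for 0 ≤ t ≤ T−1. Suppose there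 are episode boundaries 0 = t_0 < t_1 < ⋯ < t_J = T+1 and a set B ⊆ {0,…,J−2} with |B| ≤ 𝕄 such that: (i) for every 0 ≤ j ≤ J−1 and every t with t_j < t ≤ t_{j+1}−1, ‖x_t‖ ≤ κ ρ^{t−t_j}‖x_{t_j}‖ + β w_max; (ii) for every j ∈ {0,…,J−2} ∖ B, t_{j+1} − t_j = τ and ‖x_{t_{j+1}}‖ ≤ κ ρ^{τ}‖x_{t_j}‖ + β w_max. Then, with γ := L_f(1+L_π)κ, α1 := κ/((1−ρ)(1−κρ^τ)), α2 := α1·γ/(γ−1) and α3 := α2·(γ/(1−κρ^τ) + L_f(2+L_π)), one has Σ_{t=0}^{T} ‖x_t‖ ≤ β w_max (T + α1 J) + α2 γ^𝕄 ‖x_0‖ + α3 γ^𝕄 (β w_max + π̄0). -/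
/-!
Within the `j`-th episode the certificate bounds `‖x s‖` by `κ ρ^(s - t j) ‖x (t j)‖ + β w_max`, so
the l₁ norm over the horizon is at most `κ / (1 - ρ)` times the sum of the episode-start norms
`‖x (t j)‖` plus `(T + 1) β w_max`. The episode-start norms form a switched affine
sequence: a full episode contracts it by `c = κ ρ^τ < 1`, while a Break (one closed-loop step after
a certified state) multiplies it by at most `γ` up to an additive constant. Between Breaks it decays
geometrically, so its sum is at most `1 / (1 - c)` times the sum of its values just after the
Breaks; after the `i`-th Break it is at most `γ^i` times a fixed quantity, and summing over at most
`𝕄` Breaks gives the factor `γ^(𝕄 + 1) / (γ - 1)`.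
-/

open Finset

section SwitchedSequence

variable {B : Finset ℕ} {c γ e D : ℝ} {u : ℕ → ℝ} {k : ℕ}

lemma card_inter_range_succ_of_mem {j : ℕ} (hj : j ∈ B) :
    #(B ∩ range (j + 1)) = #(B ∩ range j) + 1 := by
  rw [range_add_one, inter_insert_of_mem hj, card_insert_of_notMem (by simp)]

lemma card_inter_range_succ_of_notMem {j : ℕ} (hj : j ∉ B) :
    #(B ∩ range (j + 1)) = #(B ∩ range j) := by
  rw [range_add_one, inter_insert_of_notMem hj]

theorem le_pow_card_mul_of_switched (hγ : 0 ≤ γ)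
    (hgood : ∀ j < k, j ∉ B → u (j + 1) ≤ u j)
    (hbad : ∀ j < k, j ∈ B → u (j + 1) ≤ γ * u j) :
    u k ≤ γ ^ #(B ∩ range k) * u 0 := by
  induction k with
  | zero => simp
  | succ k ih =>
    have ih := ih (fun j hj ↦ hgood j (by omega)) (fun j hj ↦ hbad j (by omega))
    by_cases hk : k ∈ B
    · rw [card_inter_range_succ_of_mem hk, pow_succ', mul_assoc]
      exact (hbad k k.lt_succ_self hk).trans (by gcongr)
    · rw [card_inter_range_succ_of_notMem hk]
      exact (hgood k k.lt_succ_self hk).trans ih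

/-- `max (u j) (e / (1 - c)) + D / (γ - 1)` grows by at most the factor `γ` at a step of `B` and
not at all at the other steps, since `e / (1 - c)` and `-D / (γ - 1)` are the fixed points of the
two affine maps. -/
theorem le_pow_card_mul_of_switched_affine (hc0 : 0 ≤ c) (hc1 : c < 1) (hγ : 1 < γ)
    (he : 0 ≤ e) (hD : 0 ≤ D)
    (hgood : ∀ j < k, j ∉ B → u (j + 1) ≤ c * u j + e)
    (hbad : ∀ j < k, j ∈ B → u (j + 1) ≤ γ * u j + D) :
    u k ≤ γ ^ #(B ∩ range k) * (max (u 0) (e / (1 - c)) + D / (γ - 1)) := by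
  have hfix : (1 - c) * (e / (1 - c)) = e := mul_div_cancel₀ _ (by linarith)
  have hfix' : γ * (D / (γ - 1)) = D + D / (γ - 1) := by
    field_simp [(by linarith : γ - 1 ≠ 0)]; ring
  have hh : 0 ≤ e / (1 - c) := div_nonneg he (by linarith)
  have hD' : 0 ≤ D / (γ - 1) := div_nonneg hD (by linarith)
  set h := e / (1 - c)
  set D' := D / (γ - 1)
  have hmul := le_pow_card_mul_of_switched (u := fun j ↦ max (u j) h + D') (k := k) (B := B)
    (γ := γ) (by linarith) ?_ ?_
  · exact (le_max_left _ _).trans (by linarith [hmul])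
  · intro j hj hjB
    have hstep := hgood j hj hjB
    have hM : c * u j ≤ c * max (u j) h := by gcongr; exact le_max_left _ _
    simp only [add_le_add_iff_right, max_le_iff, le_max_right, and_true]
    nlinarith [le_max_right (u j) h]
  · intro j hj hjB
    have hstep := hbad j hj hjB
    have hM : h ≤ max (u j) h := le_max_right _ _
    rw [← le_sub_iff_add_le, max_le_iff]
    constructor <;> nlinarith [le_max_left (u j) h]

/-- The potential `(1 - c) * ∑ j ≤ k, u j + c * u k` grows by at most `e` at a step outside `B` and
by at most `R i` at the `i`-th step of `B`. -/
theorem sum_range_succ_le_of_reset (hc0 : 0 ≤ c) (he : 0 ≤ e) (hu : ∀ j, 0 ≤ u j)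
    (R : ℕ → ℝ) (h0 : u 0 ≤ R 0)
    (hgood : ∀ j < k, j ∉ B → u (j + 1) ≤ c * u j + e)
    (hbad : ∀ j < k, j ∈ B → u (j + 1) ≤ R #(B ∩ range (j + 1))) :
    (1 - c) * ∑ j ∈ range (k + 1), u j + c * u k
      ≤ ∑ i ∈ range (#(B ∩ range k) + 1), R i + k * e := by
  induction k with
  | zero =>
    simp only [zero_add, range_one, sum_singleton, range_zero, inter_empty, card_empty,
      Nat.cast_zero, zero_mul, add_zero]
    linarith
  | succ k ih =>
    have ih := ih (fun j hj ↦ hgood j (by omega)) (fun j hj ↦ hbad j (by omega))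
    rw [sum_range_succ _ (k + 1)]
    push_cast
    by_cases hk : k ∈ B
    · have hstep := hbad k k.lt_succ_self hk
      rw [card_inter_range_succ_of_mem hk] at hstep ⊢
      rw [sum_range_succ _ (#(B ∩ range k) + 1)]
      nlinarith [mul_nonneg hc0 (hu k)]
    · have hstep := hgood k k.lt_succ_self hk
      rw [card_inter_range_succ_of_notMem hk]
      nlinarith

lemma geom_sum_le_pow_div_sub_one (hγ : 1 < γ) (n : ℕ) :
    ∑ i ∈ range n, γ ^ i ≤ γ ^ n / (γ - 1) := by
  rw [le_div_iff₀ (by linarith), geom_sum_mul_of_one_le hγ.le]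
  linarith

theorem sum_range_le_of_switched (hc0 : 0 ≤ c) (hc1 : c < 1) (hγ : 2 ≤ γ)
    (he : 0 ≤ e) (hD : 0 ≤ D) (hu : ∀ j, 0 ≤ u j) {M : ℕ} (hB : B ⊆ range k) (hM : #B ≤ M)
    (hgood : ∀ j < k, j ∉ B → u (j + 1) ≤ c * u j + e)
    (hbad : ∀ j < k, j ∈ B → u (j + 1) ≤ γ * u j + D) :
    ∑ j ∈ range (k + 1), u j
      ≤ γ ^ (M + 1) / ((γ - 1) * (1 - c)) * (u 0 + e / (1 - c) + D) + k * (e / (1 - c)) := by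
  have hh : 0 ≤ e / (1 - c) := div_nonneg he (by linarith)
  set W := u 0 + e / (1 - c) + D
  have hW : max (u 0) (e / (1 - c)) + D / (γ - 1) ≤ W := by
    have : D / (γ - 1) ≤ D := div_le_self hD (by linarith)
    have := hu 0
    rw [max_def]; split_ifs <;> linarith
  have hreset := sum_range_succ_le_of_reset hc0 he hu (fun i ↦ γ ^ i * W)
    (by simp only [pow_zero, one_mul, W]; linarith) hgood
    fun j hj hjB ↦ (le_pow_card_mul_of_switched_affine hc0 hc1 (by linarith) he hD
      (fun i hi ↦ hgood i (by omega)) (fun i hi ↦ hbad i (by omega))).trans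
      (mul_le_mul_of_nonneg_left hW (pow_nonneg (by linarith) _))
  have hgeom : ∑ i ∈ range (#(B ∩ range k) + 1), γ ^ i * W ≤ γ ^ (M + 1) / (γ - 1) * W := by
    rw [← sum_mul, inter_eq_left.mpr hB]
    refine mul_le_mul_of_nonneg_right ((geom_sum_le_pow_div_sub_one (by linarith) _).trans ?_)
      (add_nonneg (add_nonneg (hu 0) hh) hD)
    exact div_le_div_of_nonneg_right (pow_le_pow_right₀ (by linarith) (by omega)) (by linarith)
  rw [show γ ^ (M + 1) / ((γ - 1) * (1 - c)) * W + k * (e / (1 - c))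
      = (γ ^ (M + 1) / (γ - 1) * W + k * e) / (1 - c) by field_simp, le_div_iff₀ (by linarith)]
  nlinarith [mul_nonneg hc0 (hu k)]

end SwitchedSequence

section Episodes

variable {y : ℕ → ℝ} {κ ρ d : ℝ}

theorem sum_range_le_of_le_geom {K : ℝ} {L : ℕ} (hρ0 : 0 ≤ ρ) (hρ1 : ρ < 1) (hK : 0 ≤ K)
    (h : ∀ i < L, y i ≤ K * ρ ^ i + d) :
    ∑ i ∈ range L, y i ≤ K / (1 - ρ) + L * d := by
  calc ∑ i ∈ range L, y i ≤ ∑ i ∈ range L, (K * ρ ^ i + d) :=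
        sum_le_sum fun i hi ↦ h i (mem_range.mp hi)
    _ = K * ∑ i ∈ Ico 0 L, ρ ^ i + L * d := by simp [sum_add_distrib, mul_sum]
    _ ≤ K * (ρ ^ 0 / (1 - ρ)) + L * d := by gcongr; exact geom_sum_Ico_le_of_lt_one hρ0 hρ1
    _ = K / (1 - ρ) + L * d := by ring

variable {a b : ℕ}

theorem le_mul_pow_add_of_cert (hκ : 1 ≤ κ) (hd : 0 ≤ d) (hy : 0 ≤ y a)
    (hcert : ∀ s, a < s → s + 1 ≤ b → y s ≤ κ * ρ ^ (s - a) * y a + d) {s : ℕ}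
    (has : a ≤ s) (hsb : s < b) : y s ≤ κ * ρ ^ (s - a) * y a + d := by
  rcases has.eq_or_lt with rfl | has
  · simp only [Nat.sub_self, pow_zero, mul_one]
    nlinarith
  · exact hcert s has hsb

theorem le_mul_add_of_cert (hκ : 1 ≤ κ) (hρ0 : 0 ≤ ρ) (hρ1 : ρ ≤ 1) (hd : 0 ≤ d) (hy : 0 ≤ y a)
    (hcert : ∀ s, a < s → s + 1 ≤ b → y s ≤ κ * ρ ^ (s - a) * y a + d) {s : ℕ}
    (has : a ≤ s) (hsb : s < b) : y s ≤ κ * y a + d :=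
  (le_mul_pow_add_of_cert hκ hd hy hcert has hsb).trans <| by
    gcongr; exact mul_le_of_le_one_right (by linarith) (pow_le_one₀ hρ0 hρ1)

theorem sum_Ico_le_of_cert (hκ : 1 ≤ κ) (hρ0 : 0 ≤ ρ) (hρ1 : ρ < 1) (hd : 0 ≤ d)
    (hy : 0 ≤ y a) (hab : a ≤ b)
    (hcert : ∀ s, a < s → s + 1 ≤ b → y s ≤ κ * ρ ^ (s - a) * y a + d) :
    ∑ s ∈ Ico a b, y s ≤ κ / (1 - ρ) * y a + ((b : ℝ) - a) * d := by
  rw [sum_Ico_eq_sum_range]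
  refine (sum_range_le_of_le_geom (K := κ * y a) (d := d) hρ0 hρ1 (by positivity)
    fun i hi ↦ ?_).trans_eq (by rw [Nat.cast_sub hab]; ring)
  have := le_mul_pow_add_of_cert hκ hd hy hcert (a.le_add_right i) (by omega)
  rwa [Nat.add_sub_cancel_left, mul_right_comm] at this

variable {t : ℕ → ℕ} {J : ℕ}

theorem sum_Ico_eq_sum_range_sum_Ico {M : Type*} [AddCommMonoid M] (f : ℕ → M)
    (ht : MonotoneOn t (Set.Iic J)) :
    ∑ s ∈ Ico (t 0) (t J), f s = ∑ j ∈ range J, ∑ s ∈ Ico (t j) (t (j + 1)), f s := by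
  induction J with
  | zero => simp
  | succ J ih =>
    have hle : ∀ {i j}, i ≤ j → j ≤ J + 1 → t i ≤ t j := fun hij hj ↦
      ht (Set.mem_Iic.mpr (hij.trans hj)) (Set.mem_Iic.mpr hj) hij
    rw [sum_range_succ, ← ih (ht.mono (Set.Iic_subset_Iic.mpr J.le_succ)),
      sum_Ico_consecutive _ (hle J.zero_le J.le_succ) (hle J.le_succ le_rfl)]

theorem sum_Ico_le_of_episodes (hκ : 1 ≤ κ) (hρ0 : 0 ≤ ρ) (hρ1 : ρ < 1) (hd : 0 ≤ d)
    (hy : ∀ s, 0 ≤ y s) (ht : MonotoneOn t (Set.Iic J))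
    (hcert : ∀ j < J, ∀ s, t j < s → s + 1 ≤ t (j + 1) →
      y s ≤ κ * ρ ^ (s - t j) * y (t j) + d) :
    ∑ s ∈ Ico (t 0) (t J), y s ≤ κ / (1 - ρ) * ∑ j ∈ range J, y (t j) + ((t J : ℝ) - t 0) * d := by
  rw [sum_Ico_eq_sum_range_sum_Ico y ht]
  calc _ ≤ ∑ j ∈ range J, (κ / (1 - ρ) * y (t j) + ((t (j + 1) : ℝ) - t j) * d) :=
        sum_le_sum fun j hj ↦ by
          have hj := mem_range.mp hj
          exact sum_Ico_le_of_cert hκ hρ0 hρ1 hd (hy _)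
            (ht (Set.mem_Iic.mpr (by omega)) (Set.mem_Iic.mpr hj) j.le_succ) (hcert j hj)
    _ = _ := by rw [sum_add_distrib, ← mul_sum, ← sum_mul, sum_range_sub (fun j ↦ (t j : ℝ))]

end Episodes

section ClosedLoop

variable {E U W : Type*} [SeminormedAddCommGroup E] [SeminormedAddCommGroup U]
  [SeminormedAddCommGroup W] {f : E → U → W → E} {p : E → U} {Lf Lπ p0 : ℝ}

theorem norm_apply_policy_le (hLf : 0 ≤ Lf)
    (hf : ∀ x u w x' u' w', ‖f x u w - f x' u' w'‖ ≤ Lf * (‖x - x'‖ + ‖u - u'‖ + ‖w - w'‖))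
    (hf0 : f 0 0 0 = 0) (hp : ∀ x y, ‖p x - p y‖ ≤ Lπ * ‖x - y‖) (hp0 : ‖p 0‖ ≤ p0)
    (x : E) (w : W) : ‖f x (p x) w‖ ≤ Lf * ((1 + Lπ) * ‖x‖ + p0 + ‖w‖) := by
  have hpx : ‖p x‖ ≤ Lπ * ‖x‖ + p0 := by
    have := (norm_le_insert' (p x) (p 0)).trans (add_le_add hp0 (hp x 0))
    rw [sub_zero] at this
    linarith
  have hfx := hf x (p x) w 0 0 0
  simp only [hf0, sub_zero] at hfx
  exact hfx.trans (mul_le_mul_of_nonneg_left (by linarith) hLf)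

theorem norm_apply_policy_le_of_le (hLf : 0 ≤ Lf) (hLπ : 0 ≤ Lπ)
    (hf : ∀ x u w x' u' w', ‖f x u w - f x' u' w'‖ ≤ Lf * (‖x - x'‖ + ‖u - u'‖ + ‖w - w'‖))
    (hf0 : f 0 0 0 = 0) (hp : ∀ x y, ‖p x - p y‖ ≤ Lπ * ‖x - y‖) (hp0 : ‖p 0‖ ≤ p0)
    {κ a β wmax : ℝ} (hβ : 1 ≤ β) (hwmax : 0 ≤ wmax) {x : E} {w : W}
    (hx : ‖x‖ ≤ κ * a + β * wmax) (hw : ‖w‖ ≤ wmax) :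
    ‖f x (p x) w‖ ≤ Lf * (1 + Lπ) * κ * a + Lf * (2 + Lπ) * (β * wmax + p0) := by
  have hp0' : 0 ≤ p0 := (norm_nonneg _).trans hp0
  refine (norm_apply_policy_le hLf hf hf0 hp hp0 x w).trans ?_
  have : (1 + Lπ) * ‖x‖ + p0 + ‖w‖ ≤ (1 + Lπ) * κ * a + (2 + Lπ) * (β * wmax + p0) := by
    nlinarith [mul_le_mul_of_nonneg_left hx (by linarith : (0 : ℝ) ≤ 1 + Lπ)]
  nlinarith

end ClosedLoop

theorem le_finite_gain_bound {S U K c γ e p0 D0 u0 α1 α2 α3 : ℝ} {T J M : ℕ} (hK : 1 ≤ K)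
    (hc0 : 0 ≤ c) (hc1 : c < 1) (hγ : 1 < γ) (he : 0 ≤ e) (hp0 : 0 ≤ p0)
    (hα1 : α1 = K / (1 - c)) (hα2 : α2 = α1 * γ / (γ - 1))
    (hα3 : α3 = α2 * (γ / (1 - c) + D0)) (hS : S ≤ K * U + (T + 1) * e)
    (hU : U ≤ γ ^ (M + 1) / ((γ - 1) * (1 - c)) * (u0 + e / (1 - c) + D0 * (e + p0))
      + (J - 1) * (e / (1 - c))) :
    S ≤ e * (T + α1 * J) + α2 * γ ^ M * u0 + α3 * γ ^ M * (e + p0) := by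
  have hα1_ge : 1 ≤ α1 := by rw [hα1, le_div_iff₀ (by linarith)]; nlinarith
  have hα2_nonneg : 0 ≤ α2 * γ ^ M := by
    rw [hα2]; exact mul_nonneg (div_nonneg (by positivity) (by linarith)) (by positivity)
  have hdisturb : e / (1 - c) ≤ γ * (e + p0) / (1 - c) :=
    div_le_div_of_nonneg_right (by nlinarith) (by linarith)
  calc S ≤ α2 * γ ^ M * (u0 + e / (1 - c) + D0 * (e + p0)) + α1 * (J - 1) * e + (T + 1) * e := by
        have hid : K * (γ ^ (M + 1) / ((γ - 1) * (1 - c)) * (u0 + e / (1 - c) + D0 * (e + p0))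
              + (J - 1) * (e / (1 - c)))
            = α2 * γ ^ M * (u0 + e / (1 - c) + D0 * (e + p0)) + α1 * (J - 1) * e := by
          rw [hα2, hα1]; field_simp; ring
        linarith [mul_le_mul_of_nonneg_left hU (by linarith : 0 ≤ K)]
    _ ≤ _ := by
      have hα3_eq : α3 * γ ^ M * (e + p0)
          = α2 * γ ^ M * (γ * (e + p0) / (1 - c)) + α2 * γ ^ M * (D0 * (e + p0)) := by
        rw [hα3]; ring
      linarith [mul_le_mul_of_nonneg_left hdisturb hα2_nonneg, mul_le_mul_of_nonneg_right hα1_ge he]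

theorem finite_gain_l1_stability_general (n m : ℕ) (Lf Lπ κ β ρ wmax pibar0 γ α1 α2 α3 : ℝ)
    (τ T J 𝕄 : ℕ)
    (hLf : 1 ≤ Lf) (hLπ : 1 ≤ Lπ) (hκ : 1 ≤ κ) (hβ : 1 ≤ β)
    (hρ0 : 0 < ρ) (hρ1 : ρ < 1) (hw : 0 ≤ wmax) (hpibar0 : 0 ≤ pibar0)
    (hτρ : 2 * Real.sqrt 2 * κ * ρ ^ τ ≤ 1)
    (hγ : γ = Lf * (1 + Lπ) * κ)
    (hα1 : α1 = κ / ((1 - ρ) * (1 - κ * ρ ^ τ)))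
    (hα2 : α2 = α1 * γ / (γ - 1))
    (hα3 : α3 = α2 * (γ / (1 - κ * ρ ^ τ) + Lf * (2 + Lπ)))
    (f : EuclideanSpace ℝ (Fin n) → EuclideanSpace ℝ (Fin m) → EuclideanSpace ℝ (Fin n)
          → EuclideanSpace ℝ (Fin n))
    (hf : ∀ x u w x' u' w', ‖f x u w - f x' u' w'‖ ≤ Lf * (‖x - x'‖ + ‖u - u'‖ + ‖w - w'‖))
    (hf0 : f 0 0 0 = 0)
    (π : ℕ → EuclideanSpace ℝ (Fin n) → EuclideanSpace ℝ (Fin m))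
    (hπ : ∀ t x y, ‖π t x - π t y‖ ≤ Lπ * ‖x - y‖) (hπ0 : ∀ t, ‖π t 0‖ ≤ pibar0)
    (x : ℕ → EuclideanSpace ℝ (Fin n)) (w : ℕ → EuclideanSpace ℝ (Fin n))
    (hwb : ∀ t, ‖w t‖ ≤ wmax)
    (hdyn : ∀ t, t < T → x (t + 1) = f (x t) (π t (x t)) (w t))
    (hJ : 1 ≤ J) (t : ℕ → ℕ) (ht0 : t 0 = 0) (htJ : t J = T + 1)
    (hmono : ∀ j, j < J → t j < t (j + 1))
    (B : Finset ℕ) (hB : B ⊆ Finset.range (J - 1)) (hBcard : B.card ≤ 𝕄)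
    (hcert : ∀ j, j < J → ∀ s, t j < s → s + 1 ≤ t (j + 1) →
        ‖x s‖ ≤ κ * ρ ^ (s - t j) * ‖x (t j)‖ + β * wmax)
    (hfull : ∀ j, j + 2 ≤ J → j ∉ B →
        t (j + 1) - t j = τ ∧ ‖x (t (j + 1))‖ ≤ κ * ρ ^ τ * ‖x (t j)‖ + β * wmax) :
    ∑ s ∈ Finset.range (T + 1), ‖x s‖
      ≤ β * wmax * ((T : ℝ) + α1 * (J : ℝ)) + α2 * γ ^ 𝕄 * ‖x 0‖
        + α3 * γ ^ 𝕄 * (β * wmax + pibar0) := by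
  set c := κ * ρ ^ τ
  have hc0 : 0 ≤ c := by positivity
  have hc1 : c < 1 := by nlinarith [Real.one_lt_sqrt_two]
  have hγ2 : 2 ≤ γ := by
    rw [hγ]; calc (2 : ℝ) = 1 * (1 + 1) * 1 := by norm_num
      _ ≤ _ := by gcongr
  have ht : MonotoneOn t (Set.Iic J) := (strictMonoOn_Iic_of_lt_succ hmono).monotoneOn
  have hbreak : ∀ j < J - 1, j ∈ B →
      ‖x (t (j + 1))‖ ≤ γ * ‖x (t j)‖ + Lf * (2 + Lπ) * (β * wmax + pibar0) := by
    intro j hj _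
    obtain ⟨s, hs, hjs, hsT⟩ : ∃ s, t (j + 1) = s + 1 ∧ t j ≤ s ∧ s < T := by
      have := ht (Set.mem_Iic.mpr (by omega)) (Set.mem_Iic.mpr le_rfl) (by omega : j + 1 + 1 ≤ J)
      have := hmono j (by omega)
      have := hmono (j + 1) (by omega)
      exact ⟨t (j + 1) - 1, by omega, by omega, by omega⟩
    rw [hs, hdyn s hsT, hγ]
    exact norm_apply_policy_le_of_le (by linarith) (by linarith) hf hf0 (hπ s) (hπ0 s) hβ hw
      (le_mul_add_of_cert (y := fun s ↦ ‖x s‖) hκ hρ0.le hρ1.le (by positivity) (norm_nonneg _)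
        (hcert j (by omega)) hjs (by omega)) (hwb s)
  have hu := sum_range_le_of_switched (u := fun j ↦ ‖x (t j)‖) hc0 hc1 hγ2 (by positivity)
    (by positivity) (fun _ ↦ norm_nonneg _) hB hBcard (fun j hj hjB ↦ (hfull j (by omega) hjB).2)
    hbreak
  rw [Nat.sub_add_cancel hJ, Nat.cast_sub hJ, Nat.cast_one, ht0] at hu
  have hx := sum_Ico_le_of_episodes hκ hρ0.le hρ1 (by positivity) (fun s ↦ norm_nonneg (x s)) ht
    hcert
  rw [ht0, htJ, ← range_eq_Ico, Nat.cast_zero, sub_zero, Nat.cast_succ] at hx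
  exact le_finite_gain_bound (by rw [le_div_iff₀ (by linarith)]; linarith) hc0 hc1 (by linarith)
    (by positivity) hpibar0 (by rw [hα1, div_div]) hα2 hα3 hx hu

/-- Finite-gain l₁ stability of the Exp3-ISS switching algorithm: the horizon is
split into J episodes; within every episode the E-ISS certificate holds; every
non-Break episode (those not in B) has full length τ and passes the certificate
at its endpoint; Breaks happen at most 𝕄 times. -/
theorem finite_gain_l1_stability (n m : ℕ) (Lf Lπ κ β ρ wmax pibar0 γ α1 α2 α3 : ℝ)
    (τ T J 𝕄 : ℕ)
    (hLf : 1 ≤ Lf) (hLπ : 1 ≤ Lπ) (hκ : 1 ≤ κ) (hβ : 1 ≤ β)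
    (hρ0 : 0 < ρ) (hρ1 : ρ < 1) (hw : 0 ≤ wmax) (hpibar0 : 0 ≤ pibar0)
    (hτ : 1 ≤ τ) (hτρ : 2 * Real.sqrt 2 * κ * ρ ^ τ ≤ 1)
    (hγ : γ = Lf * (1 + Lπ) * κ)
    (hα1 : α1 = κ / ((1 - ρ) * (1 - κ * ρ ^ τ)))
    (hα2 : α2 = α1 * γ / (γ - 1))
    (hα3 : α3 = α2 * (γ / (1 - κ * ρ ^ τ) + Lf * (2 + Lπ)))
    (f : EuclideanSpace ℝ (Fin n) → EuclideanSpace ℝ (Fin m) → EuclideanSpace ℝ (Fin n)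
          → EuclideanSpace ℝ (Fin n))
    (hf : ∀ x u w x' u' w', ‖f x u w - f x' u' w'‖ ≤ Lf * (‖x - x'‖ + ‖u - u'‖ + ‖w - w'‖))
    (hf0 : f 0 0 0 = 0)
    (π : ℕ → EuclideanSpace ℝ (Fin n) → EuclideanSpace ℝ (Fin m))
    (hπ : ∀ t x y, ‖π t x - π t y‖ ≤ Lπ * ‖x - y‖) (hπ0 : ∀ t, ‖π t 0‖ ≤ pibar0)
    (x : ℕ → EuclideanSpace ℝ (Fin n)) (w : ℕ → EuclideanSpace ℝ (Fin n))
    (hwb : ∀ t, ‖w t‖ ≤ wmax)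
    (hdyn : ∀ t, t < T → x (t + 1) = f (x t) (π t (x t)) (w t))
    (hJ : 1 ≤ J) (t : ℕ → ℕ) (ht0 : t 0 = 0) (htJ : t J = T + 1)
    (hmono : ∀ j, j < J → t j < t (j + 1))
    (B : Finset ℕ) (hB : B ⊆ Finset.range (J - 1)) (hBcard : B.card ≤ 𝕄)
    (hcert : ∀ j, j < J → ∀ s, t j < s → s + 1 ≤ t (j + 1) →
        ‖x s‖ ≤ κ * ρ ^ (s - t j) * ‖x (t j)‖ + β * wmax)
    (hfull : ∀ j, j + 2 ≤ J → j ∉ B →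
        t (j + 1) - t j = τ ∧ ‖x (t (j + 1))‖ ≤ κ * ρ ^ τ * ‖x (t j)‖ + β * wmax) :
    ∑ s ∈ Finset.range (T + 1), ‖x s‖
      ≤ β * wmax * ((T : ℝ) + α1 * (J : ℝ)) + α2 * γ ^ 𝕄 * ‖x 0‖
        + α3 * γ ^ 𝕄 * (β * wmax + pibar0) :=
  finite_gain_l1_stability_general n m Lf Lπ κ β ρ wmax pibar0 γ α1 α2 α3 τ T J 𝕄 hLf hLπ hκ hβ hρ0
    hρ1 hw hpibar0 hτρ hγ hα1 hα2 hα3 f hf hf0 π hπ hπ0 x w hwb hdyn hJ t ht0 htJ hmono B hB hBcard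
    hcert hfull
end

section
/- Let L_f ≥ 1, L_π ≥ 1, κ ≥ 1, 0 < ρ < 1 and an integer τ ≥ 1 with 2√2·κ·ρ^τ ≤ 1 be given, and set γ := L_f(1+L_π)κ. There exist constants C₁, C₂, C₃ > 0, depending only on (L_f, L_π, κ, ρ, τ), such that the following holds for all β ≥ 1, w_max ≥ 0, π̄0 ≥ 0, all natural numbers n, m, T, J ≥ 1, 𝕄, and all data as follows. Let f : ℝ^n × ℝ^m × ℝ^n → ℝ^n satisfy ‖f(x,u,w) − f(x',u',w')‖ ≤ L_f(‖x−x'‖+‖u−u'‖+‖w−w'‖) and f(0,0,0) = 0; for each t let π_t : ℝ^n → ℝ^m be L_π-Lipschitz with ‖π_t(0)‖ ≤ π̄0; let ‖w_t‖ ≤ w_max and x_{t+1} = f(x_t, π_t(x_t), w_t) for 0 ≤ t ≤ T−1; and suppose there are episode boundaries 0 = t_0 < t_1 < ⋯ < t_J = T+1 and a set B ⊆ {0,…,J−2} with |B| ≤ 𝕄 such that (i) for every 0 ≤ j ≤ J−1 and every t with t_j < t ≤ t_{j+1}−1, ‖x_t‖ ≤ κ ρ^{t−t_j}‖x_{t_j}‖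 + β w_max, and (ii) for every j ∈ {0,…,J−2} ∖ B, t_{j+1} − t_j = τ and ‖x_{t_{j+1}}‖ ≤ κ ρ^{τ}‖x_{t_j}‖ + β w_max. Then Σ_{t=0}^{T} ‖x_t‖² ≤ 2β² w_max² (T + C₁ J) + C₂ γ^{2𝕄} ‖x_0‖² + C₃ γ^{2𝕄} (β² w_max² + π̄0²). -/
/-!
Split the trajectory at the episode boundaries `t j`. Inside an episode the stability certificate
bounds `‖x s‖` by a geometric sequence started at the boundary value, so the total is at most
`2κ²/(1-ρ²)` times the sum of the squared boundary values, plus `2(βw)²` per time step.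

The boundary values `a j = ‖x (t j)‖` obey `a (j+1) ≤ a j / 2 + βw` after a certified episode
(as `κρ^τ ≤ 1/2`), and `a (j+1) ≤ γ a j + γ(2βw + π̄₀)` after a break: one step of the
Lipschitz closed loop from the last state of the episode, itself at most `κ a j + βw`.
Hence `a j ≲ γ^(N j) 2^(-λ j) (a 0 + const) + 2βw`, where `N j` counts the breaks before `j` and
`λ j` the certified episodes since the last break. Between two breaks the squared weights form
a geometric series, and since `γ ≥ 2` the series over the at most `𝕄` blocks is dominated by its
last term `γ^(2𝕄)`.
-/

open Finset

lemma sum_range_sq_le_of_le_geometric {y : ℕ → ℝ} {A r c : ℝ} (n : ℕ) (hr₀ : 0 ≤ r)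
    (hr₁ : r < 1) (hy₀ : ∀ i, 0 ≤ y i) (hy : ∀ i < n, y i ≤ A * r ^ i + c) :
    ∑ i ∈ range n, y i ^ 2 ≤ 2 * A ^ 2 / (1 - r ^ 2) + 2 * c ^ 2 * n := by
  have hr2 : r ^ 2 < 1 := by nlinarith
  have hterm : ∀ i < n, y i ^ 2 ≤ 2 * A ^ 2 * (r ^ 2) ^ i + 2 * c ^ 2 := by
    intro i hi
    have h := hy i hi
    have : y i ^ 2 ≤ (A * r ^ i + c) ^ 2 := pow_le_pow_left₀ (hy₀ i) h 2
    have hpow : (r ^ 2) ^ i = (r ^ i) ^ 2 := by ring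
    rw [hpow]
    nlinarith [sq_nonneg (A * r ^ i - c)]
  have hgeom : ∑ i ∈ range n, (r ^ 2) ^ i ≤ 1 / (1 - r ^ 2) := by
    have h := geom_sum_Ico_le_of_lt_one (m := 0) (n := n) (sq_nonneg r) hr2
    rwa [pow_zero, ← range_eq_Ico] at h
  calc ∑ i ∈ range n, y i ^ 2
      ≤ ∑ i ∈ range n, (2 * A ^ 2 * (r ^ 2) ^ i + 2 * c ^ 2) :=
        sum_le_sum fun i hi => hterm i (mem_range.mp hi)
    _ = 2 * A ^ 2 * ∑ i ∈ range n, (r ^ 2) ^ i + 2 * c ^ 2 * n := by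
        rw [sum_add_distrib, ← mul_sum, sum_const, card_range, nsmul_eq_mul]; ring
    _ ≤ 2 * A ^ 2 * (1 / (1 - r ^ 2)) + 2 * c ^ 2 * n := by gcongr
    _ = 2 * A ^ 2 / (1 - r ^ 2) + 2 * c ^ 2 * n := by ring

section Episode

variable {a : ℕ → ℝ} {m n : ℕ} {κ ρ c : ℝ}

lemma le_geometric_of_episode (hκ : 1 ≤ κ) (hc : 0 ≤ c) (ha : 0 ≤ a m)
    (hep : ∀ s, m < s → s + 1 ≤ n → a s ≤ κ * ρ ^ (s - m) * a m + c) :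
    ∀ s, m ≤ s → s + 1 ≤ n → a s ≤ κ * ρ ^ (s - m) * a m + c := by
  intro s hms hsn
  rcases hms.lt_or_eq with hms | rfl
  · exact hep s hms hsn
  · simp only [Nat.sub_self, pow_zero, mul_one]
    nlinarith

lemma sum_Ico_sq_le_of_episode (hκ : 1 ≤ κ) (hρ₀ : 0 ≤ ρ) (hρ₁ : ρ < 1) (hc : 0 ≤ c)
    (ha : ∀ s, 0 ≤ a s) (hmn : m ≤ n)
    (hep : ∀ s, m < s → s + 1 ≤ n → a s ≤ κ * ρ ^ (s - m) * a m + c) :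
    ∑ s ∈ Ico m n, a s ^ 2 ≤ 2 * κ ^ 2 / (1 - ρ ^ 2) * a m ^ 2 + 2 * c ^ 2 * ((n : ℝ) - m) := by
  rw [sum_Ico_eq_sum_range]
  have hgeom := sum_range_sq_le_of_le_geometric (y := fun i => a (m + i)) (A := κ * a m)
    (c := c) (n - m) hρ₀ hρ₁ (fun i => ha _) fun i hi => by
      simpa [mul_right_comm] using
        le_geometric_of_episode hκ hc (ha m) hep (m + i) (by omega) (by omega)
  rw [Nat.cast_sub hmn] at hgeom
  convert hgeom using 2
  ring

end Episode

lemma sum_range_sum_Ico_eq {M : Type*} [AddCommMonoid M] (f : ℕ → M) {t : ℕ → ℕ} {J : ℕ}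
    (ht : MonotoneOn t (Set.Iic J)) :
    ∑ j ∈ range J, ∑ s ∈ Ico (t j) (t (j + 1)), f s = ∑ s ∈ Ico (t 0) (t J), f s := by
  induction J with
  | zero => simp
  | succ J ih =>
    have mem : ∀ {i}, i ≤ J + 1 → i ∈ Set.Iic (J + 1) := id
    rw [sum_range_succ, ih (ht.mono (Set.Iic_subset_Iic.mpr J.le_succ)),
      sum_Ico_consecutive f (ht (mem (Nat.zero_le _)) (mem J.le_succ) (Nat.zero_le J))
        (ht (mem J.le_succ) (mem le_rfl) J.le_succ)]

lemma sum_range_sq_le_of_episodes {a : ℕ → ℝ} {t : ℕ → ℕ} {J T : ℕ} {κ ρ c : ℝ} (hκ : 1 ≤ κ)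
    (hρ₀ : 0 ≤ ρ) (hρ₁ : ρ < 1) (hc : 0 ≤ c) (ha : ∀ s, 0 ≤ a s)
    (ht : MonotoneOn t (Set.Iic J)) (ht₀ : t 0 = 0) (htJ : t J = T + 1)
    (hep : ∀ j < J, ∀ s, t j < s → s + 1 ≤ t (j + 1) →
      a s ≤ κ * ρ ^ (s - t j) * a (t j) + c) :
    ∑ s ∈ range (T + 1), a s ^ 2
      ≤ 2 * κ ^ 2 / (1 - ρ ^ 2) * ∑ j ∈ range J, a (t j) ^ 2 + 2 * c ^ 2 * (T + 1) := by
  have hlen : ∑ j ∈ range J, ((t (j + 1) : ℝ) - t j) = T + 1 := by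
    rw [sum_range_sub (fun j => (t j : ℝ)), ht₀, htJ]; push_cast; ring
  have hmem : ∀ {i}, i ≤ J → i ∈ Set.Iic J := id
  have hrange : range (T + 1) = Ico (t 0) (t J) := by rw [ht₀, htJ, range_eq_Ico]
  rw [hrange, ← sum_range_sum_Ico_eq _ ht, mul_sum, ← hlen, mul_sum,
    ← sum_add_distrib]
  refine sum_le_sum fun j hj => ?_
  have hj := mem_range.mp hj
  exact sum_Ico_sq_le_of_episode hκ hρ₀ hρ₁ hc ha
    (ht (hmem hj.le) (hmem hj) (Nat.le_succ j)) (hep j hj)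

section SwitchingWeights

variable (B : Finset ℕ)

def badCount (k : ℕ) : ℕ := #(B ∩ range k)

def goodStreak : ℕ → ℕ
  | 0 => 0
  | k + 1 => if k ∈ B then 0 else goodStreak k + 1

variable {B}

lemma badCount_zero : badCount B 0 = 0 := by simp [badCount]

lemma badCount_succ_of_mem {k : ℕ} (hk : k ∈ B) : badCount B (k + 1) = badCount B k + 1 := by
  rw [badCount, badCount, range_add_one, inter_insert_of_mem hk,
    card_insert_of_notMem (by simp)]

lemma badCount_succ_of_notMem {k : ℕ} (hk : k ∉ B) : badCount B (k + 1) = badCount B k := by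
  rw [badCount, badCount, range_add_one, inter_insert_of_notMem hk]

lemma badCount_le_card (k : ℕ) : badCount B k ≤ #B := card_le_card inter_subset_left

variable (B)

noncomputable def switchWeight (γ : ℝ) (k : ℕ) : ℝ := γ ^ badCount B k / 2 ^ goodStreak B k

variable {B}

lemma switchWeight_succ_of_mem {γ : ℝ} {k : ℕ} (hk : k ∈ B) :
    switchWeight B γ (k + 1) = γ ^ (badCount B k + 1) := by
  simp [switchWeight, goodStreak, hk, badCount_succ_of_mem hk]

lemma switchWeight_succ_of_notMem {γ : ℝ} {k : ℕ} (hk : k ∉ B) :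
    switchWeight B γ (k + 1) = switchWeight B γ k / 2 := by
  simp only [switchWeight, goodStreak, hk, if_false, badCount_succ_of_notMem hk, pow_succ]
  ring

-- `2 * switchWeight ^ 2` is a potential: a good step halves the weight, and `γ ^ 2 ≥ 4` pays
-- for the reset of the streak at a break.
lemma sum_sq_switchWeight_add_le {γ : ℝ} (hγ : 2 ≤ γ) (k : ℕ) :
    ∑ j ∈ range k, switchWeight B γ j ^ 2 + 2 * switchWeight B γ k ^ 2
      ≤ 3 * γ ^ (2 * badCount B k) := by
  induction k with
  | zero => norm_num [switchWeight, goodStreak, badCount_zero]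
  | succ k ih =>
    rw [sum_range_succ]
    by_cases hk : k ∈ B
    · have hγ4 : 4 * γ ^ (2 * badCount B k) ≤ γ ^ (2 * badCount B k + 2) := by
        rw [pow_add, mul_comm]; gcongr; nlinarith
      have hsq : (γ ^ (badCount B k + 1)) ^ 2 = γ ^ (2 * badCount B k + 2) := by ring
      rw [switchWeight_succ_of_mem hk, badCount_succ_of_mem hk, hsq, mul_add, mul_one]
      nlinarith [sq_nonneg (switchWeight B γ k)]
    · rw [switchWeight_succ_of_notMem hk, badCount_succ_of_notMem hk]
      nlinarith [sq_nonneg (switchWeight B γ k)]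

-- The subtracted `2 * c + e` is the slack that pays for the offset `e` of each break (`γ ≥ 2`).
lemma le_of_switching {a : ℕ → ℝ} {γ c e : ℝ} {K : ℕ} (hγ : 2 ≤ γ) (hc : 0 ≤ c)
    (he : 0 ≤ e) (ha₀ : 0 ≤ a 0)
    (hgood : ∀ k, k + 1 < K → k ∉ B → a (k + 1) ≤ a k / 2 + c)
    (hbad : ∀ k, k + 1 < K → k ∈ B → a (k + 1) ≤ γ * a k + e) :
    ∀ k < K, a k ≤ (γ ^ badCount B k * (a 0 + 2 * c + e) - (2 * c + e)) / 2 ^ goodStreak B k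
      + 2 * c := by
  intro k
  induction k with
  | zero =>
    intro
    simp only [badCount_zero, goodStreak, pow_zero, one_mul, div_one]
    linarith
  | succ k ih =>
    intro hk
    have ih := ih (by omega)
    by_cases hkB : k ∈ B
    · -- the bracket is nonnegative, so a break may forget the decay `2 ^ goodStreak B k`
      have hN : 1 ≤ γ ^ badCount B k := one_le_pow₀ (by linarith)
      have hbracket : 0 ≤ γ ^ badCount B k * (a 0 + 2 * c + e) - (2 * c + e) := by nlinarith
      have hdecay : (γ ^ badCount B k * (a 0 + 2 * c + e) - (2 * c + e)) / 2 ^ goodStreak B k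
          ≤ γ ^ badCount B k * (a 0 + 2 * c + e) - (2 * c + e) :=
        div_le_self hbracket (one_le_pow₀ (by norm_num))
      simp only [badCount_succ_of_mem hkB, goodStreak, hkB, if_true, pow_zero, div_one, pow_succ]
      nlinarith [hbad k hk hkB]
    · simp only [badCount_succ_of_notMem hkB, goodStreak, hkB, if_false, pow_succ]
      have := hgood k hk hkB
      rw [div_mul_eq_div_div]
      linarith

lemma sum_range_sq_le_of_switching {a : ℕ → ℝ} {γ c e : ℝ} {K : ℕ} (hγ : 2 ≤ γ) (hc : 0 ≤ c)
    (he : 0 ≤ e) (ha : ∀ k, 0 ≤ a k)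
    (hgood : ∀ k, k + 1 < K → k ∉ B → a (k + 1) ≤ a k / 2 + c)
    (hbad : ∀ k, k + 1 < K → k ∈ B → a (k + 1) ≤ γ * a k + e) :
    ∑ k ∈ range K, a k ^ 2 ≤ 6 * γ ^ (2 * #B) * (a 0 + 2 * c + e) ^ 2 + 8 * c ^ 2 * K := by
  set R := a 0 + 2 * c + e
  have hR : 0 ≤ R := by have := ha 0; positivity
  have hpoint : ∀ k < K, a k ^ 2 ≤ 2 * R ^ 2 * switchWeight B γ k ^ 2 + 8 * c ^ 2 := by
    intro k hk
    have hinv := le_of_switching hγ hc he (ha 0) hgood hbad k hk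
    have hle : a k ≤ switchWeight B γ k * R + 2 * c := by
      rw [switchWeight, div_mul_eq_mul_div]
      have : 0 ≤ (2 * c + e) / 2 ^ goodStreak B k := by positivity
      rw [sub_div] at hinv
      linarith
    nlinarith [ha k, sq_nonneg (switchWeight B γ k * R - 2 * c)]
  have hweights : ∑ k ∈ range K, switchWeight B γ k ^ 2 ≤ 3 * γ ^ (2 * #B) := by
    have hmono : γ ^ (2 * badCount B K) ≤ γ ^ (2 * #B) :=
      pow_le_pow_right₀ (by linarith) (by have := badCount_le_card (B := B) K; omega)
    nlinarith [sum_sq_switchWeight_add_le (B := B) hγ K, sq_nonneg (switchWeight B γ K)]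
  calc ∑ k ∈ range K, a k ^ 2
      ≤ ∑ k ∈ range K, (2 * R ^ 2 * switchWeight B γ k ^ 2 + 8 * c ^ 2) :=
        sum_le_sum fun k hk => hpoint k (mem_range.mp hk)
    _ = 2 * R ^ 2 * ∑ k ∈ range K, switchWeight B γ k ^ 2 + 8 * c ^ 2 * K := by
        rw [sum_add_distrib, ← mul_sum, sum_const, card_range, nsmul_eq_mul]; ring
    _ ≤ 6 * γ ^ (2 * #B) * R ^ 2 + 8 * c ^ 2 * K := by nlinarith [sq_nonneg R]

end SwitchingWeights

lemma norm_closedLoop_le {E U W F : Type*} [SeminormedAddCommGroup E]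
    [SeminormedAddCommGroup U] [SeminormedAddCommGroup W] [SeminormedAddCommGroup F]
    {f : E → U → W → F} {π : E → U} {Lf Lπ p : ℝ} (hLf : 0 ≤ Lf)
    (hf : ∀ x u w x' u' w', ‖f x u w - f x' u' w'‖ ≤ Lf * (‖x - x'‖ + ‖u - u'‖ + ‖w - w'‖))
    (hf₀ : f 0 0 0 = 0) (hπ : ∀ x y, ‖π x - π y‖ ≤ Lπ * ‖x - y‖) (hπ₀ : ‖π 0‖ ≤ p)
    (x : E) {w : W} {q : ℝ} (hw : ‖w‖ ≤ q) : ‖f x (π x) w‖ ≤ Lf * ((1 + Lπ) * ‖x‖ + p + q) := by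
  have hπx : ‖π x‖ ≤ Lπ * ‖x‖ + p := by
    linarith [norm_le_norm_sub_add (π x) (π 0), sub_zero x ▸ hπ x 0]
  calc ‖f x (π x) w‖ ≤ Lf * (‖x‖ + ‖π x‖ + ‖w‖) := by simpa [hf₀] using hf x (π x) w 0 0 0
    _ ≤ Lf * ((1 + Lπ) * ‖x‖ + p + q) := by gcongr Lf * ?_; linarith

lemma le_of_episode_break {a : ℕ → ℝ} {m n : ℕ} {Lf Lπ κ ρ γ c p w : ℝ} (hLf : 0 ≤ Lf)
    (hLπ : 0 ≤ Lπ) (hκ : 1 ≤ κ) (hρ₀ : 0 ≤ ρ) (hρ₁ : ρ ≤ 1) (hγ : Lf * (1 + Lπ) * κ ≤ γ)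
    (hc : 0 ≤ c) (hp : 0 ≤ p) (hw : w ≤ c) (ha : 0 ≤ a m) (hmn : m < n)
    (hstep : ∀ s < n, a (s + 1) ≤ Lf * ((1 + Lπ) * a s + p + w))
    (hep : ∀ s, m < s → s + 1 ≤ n → a s ≤ κ * ρ ^ (s - m) * a m + c) :
    a n ≤ γ * a m + γ * (2 * c + p) := by
  have hlast : a (n - 1) ≤ κ * a m + c := by
    have h := le_geometric_of_episode hκ hc ha hep (n - 1) (by omega) (by omega)
    have : κ * ρ ^ (n - 1 - m) * a m ≤ κ * a m := by
      have := pow_le_one₀ hρ₀ hρ₁ (n := n - 1 - m)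
      have : 0 ≤ κ * a m := by positivity
      nlinarith
    linarith
  have hLfLπ : Lf * (1 + Lπ) ≤ γ := (le_mul_of_one_le_right (by positivity) hκ).trans hγ
  have hLfγ : Lf ≤ γ := (le_mul_of_one_le_right hLf (by linarith)).trans hLfLπ
  calc a n = a (n - 1 + 1) := by rw [Nat.sub_add_cancel (by omega)]
    _ ≤ Lf * ((1 + Lπ) * (κ * a m + c) + p + c) := by
        refine (hstep (n - 1) (by omega)).trans ?_
        gcongr
    _ = Lf * (1 + Lπ) * κ * a m + Lf * (1 + Lπ) * c + Lf * p + Lf * c := by ring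
    _ ≤ γ * a m + γ * c + γ * p + γ * c := by gcongr
    _ = γ * a m + γ * (2 * c + p) := by ring

lemma sum_range_sq_le_of_switched_episodes {a : ℕ → ℝ} {t : ℕ → ℕ} {B : Finset ℕ} {J T : ℕ}
    {κ ρ γ c e : ℝ} (hκ : 1 ≤ κ) (hρ₀ : 0 ≤ ρ) (hρ₁ : ρ < 1) (hγ : 2 ≤ γ) (hc : 0 ≤ c)
    (he : 0 ≤ e) (ha : ∀ s, 0 ≤ a s) (ht : MonotoneOn t (Set.Iic J)) (ht₀ : t 0 = 0)
    (htJ : t J = T + 1)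
    (hep : ∀ j < J, ∀ s, t j < s → s + 1 ≤ t (j + 1) →
      a s ≤ κ * ρ ^ (s - t j) * a (t j) + c)
    (hgood : ∀ k, k + 1 < J → k ∉ B → a (t (k + 1)) ≤ a (t k) / 2 + c)
    (hbad : ∀ k, k + 1 < J → k ∈ B → a (t (k + 1)) ≤ γ * a (t k) + e) :
    ∑ s ∈ range (T + 1), a s ^ 2 ≤ 2 * κ ^ 2 / (1 - ρ ^ 2) *
      (6 * γ ^ (2 * #B) * (a 0 + 2 * c + e) ^ 2 + 8 * c ^ 2 * J) + 2 * c ^ 2 * (T + 1) := by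
  have hboundary := sum_range_sq_le_of_switching (a := fun j => a (t j)) hγ hc he
    (fun _ => ha _) hgood hbad
  rw [ht₀] at hboundary
  have : ρ ^ 2 < 1 := by nlinarith
  exact (sum_range_sq_le_of_episodes hκ hρ₀ hρ₁ hc ha ht ht₀ htJ hep).trans (by gcongr)

lemma add_two_mul_add_mul_sq_le {X c p γ : ℝ} (hX : 0 ≤ X) (hc : 0 ≤ c) (hp : 0 ≤ p)
    (hγ : 1 ≤ γ) :
    (X + 2 * c + γ * (2 * c + p)) ^ 2 ≤ 3 * X ^ 2 + 48 * γ ^ 2 * (c ^ 2 + p ^ 2) := by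
  have h2c : 2 * c ≤ 2 * γ * c := by nlinarith
  calc (X + 2 * c + γ * (2 * c + p)) ^ 2 ≤ (X + 4 * γ * c + γ * p) ^ 2 :=
        pow_le_pow_left₀ (by positivity) (by linarith) 2
    _ ≤ 3 * (X ^ 2 + (4 * γ * c) ^ 2 + (γ * p) ^ 2) := by
        nlinarith [sq_nonneg (X - 4 * γ * c), sq_nonneg (X - γ * p), sq_nonneg (4 * γ * c - γ * p)]
    _ ≤ 3 * X ^ 2 + 48 * γ ^ 2 * (c ^ 2 + p ^ 2) := by nlinarith [sq_nonneg (γ * p)]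

theorem finite_gain_l2_stability_general (Lf Lπ κ ρ γ : ℝ) (τ : ℕ)
    (hLf : 1 ≤ Lf) (hLπ : 1 ≤ Lπ) (hκ : 1 ≤ κ) (hρ0 : 0 < ρ) (hρ1 : ρ < 1)
    (hτρ : 2 * Real.sqrt 2 * κ * ρ ^ τ ≤ 1)
    (hγ : γ = Lf * (1 + Lπ) * κ) :
    ∃ C₁ C₂ C₃ : ℝ, 0 < C₁ ∧ 0 < C₂ ∧ 0 < C₃ ∧
      ∀ (β wmax pibar0 : ℝ) (n m T J 𝕄 : ℕ)
        (f : EuclideanSpace ℝ (Fin n) → EuclideanSpace ℝ (Fin m)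
              → EuclideanSpace ℝ (Fin n) → EuclideanSpace ℝ (Fin n))
        (π : ℕ → EuclideanSpace ℝ (Fin n) → EuclideanSpace ℝ (Fin m))
        (x : ℕ → EuclideanSpace ℝ (Fin n)) (w : ℕ → EuclideanSpace ℝ (Fin n))
        (t : ℕ → ℕ) (B : Finset ℕ),
        1 ≤ β → 0 ≤ wmax → 0 ≤ pibar0 → 1 ≤ J →
        (∀ x u w x' u' w', ‖f x u w - f x' u' w'‖
            ≤ Lf * (‖x - x'‖ + ‖u - u'‖ + ‖w - w'‖)) →
        f 0 0 0 = 0 →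
        (∀ s x y, ‖π s x - π s y‖ ≤ Lπ * ‖x - y‖) →
        (∀ s, ‖π s 0‖ ≤ pibar0) →
        (∀ s, ‖w s‖ ≤ wmax) →
        (∀ s, s < T → x (s + 1) = f (x s) (π s (x s)) (w s)) →
        t 0 = 0 → t J = T + 1 →
        (∀ j, j < J → t j < t (j + 1)) →
        B ⊆ Finset.range (J - 1) → B.card ≤ 𝕄 →
        (∀ j, j < J → ∀ s, t j < s → s + 1 ≤ t (j + 1) →
            ‖x s‖ ≤ κ * ρ ^ (s - t j) * ‖x (t j)‖ + β * wmax) →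
        (∀ j, j + 2 ≤ J → j ∉ B →
            t (j + 1) - t j = τ ∧
            ‖x (t (j + 1))‖ ≤ κ * ρ ^ τ * ‖x (t j)‖ + β * wmax) →
        ∑ s ∈ Finset.range (T + 1), ‖x s‖ ^ 2
          ≤ 2 * β ^ 2 * wmax ^ 2 * ((T : ℝ) + C₁ * (J : ℝ))
            + C₂ * γ ^ (2 * 𝕄) * ‖x 0‖ ^ 2
            + C₃ * γ ^ (2 * 𝕄) * (β ^ 2 * wmax ^ 2 + pibar0 ^ 2) := by
  have hγ₂ : 2 ≤ γ := by
    have : 2 ≤ Lf * (1 + Lπ) := by nlinarith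
    rw [hγ]; nlinarith
  have hhalf : κ * ρ ^ τ ≤ 1 / 2 := by nlinarith [Real.one_lt_sqrt_two, pow_pos hρ0 τ]
  obtain ⟨P, hPdef⟩ : ∃ P, P = 2 * κ ^ 2 / (1 - ρ ^ 2) := ⟨_, rfl⟩
  have hP : 0 < P := by
    have : ρ ^ 2 < 1 := by nlinarith
    rw [hPdef]; positivity
  refine ⟨1 + 4 * P, 18 * P, 288 * P * γ ^ 2, by positivity, by positivity, by positivity, ?_⟩
  intro β wmax pibar0 n m T J 𝕄 f π x w t B hβ hw hpi hJ hf hf0 hπ hπ0 hwb hdyn ht0 htJ ht _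
    hBcard hEp hGood
  set c := β * wmax
  have hc : 0 ≤ c := by positivity
  have htmono : StrictMonoOn t (Set.Iic J) := strictMonoOn_Iic_of_lt_succ ht
  have hstep : ∀ s < T, ‖x (s + 1)‖ ≤ Lf * ((1 + Lπ) * ‖x s‖ + pibar0 + wmax) := fun s hs =>
    hdyn s hs ▸ norm_closedLoop_le (by linarith) hf hf0 (hπ s) (hπ0 s) (x s) (hwb s)
  have hbad : ∀ k, k + 1 < J → k ∈ B →
      ‖x (t (k + 1))‖ ≤ γ * ‖x (t k)‖ + γ * (2 * c + pibar0) := fun k hk _ => by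
    have hT : t (k + 1) < t J := htmono (Set.mem_Iic.mpr (by omega)) (Set.mem_Iic.mpr le_rfl) hk
    rw [htJ] at hT
    exact le_of_episode_break (a := (‖x ·‖)) (by linarith) (by linarith) hκ hρ0.le hρ1.le hγ.ge
      hc hpi (le_mul_of_one_le_left hw hβ) (norm_nonneg _) (ht k (by omega))
      (fun s hs => hstep s (by omega)) (hEp k (by omega))
  have hsum := sum_range_sq_le_of_switched_episodes hκ hρ0.le hρ1 hγ₂ hc (by positivity)
    (fun s => norm_nonneg (x s)) htmono.monotoneOn ht0 htJ hEp
    (fun k hk hkB => (hGood k hk hkB).2.trans (by nlinarith [norm_nonneg (x (t k))])) hbad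
  have hG : γ ^ (2 * #B) ≤ γ ^ (2 * 𝕄) := pow_le_pow_right₀ (by linarith) (by omega)
  have hR := add_two_mul_add_mul_sq_le (norm_nonneg (x 0)) hc hpi (by linarith : 1 ≤ γ)
  have hJ' : (1 : ℝ) ≤ J := by exact_mod_cast hJ
  rw [← hPdef] at hsum
  rw [show β ^ 2 * wmax ^ 2 = c ^ 2 by ring]
  calc ∑ s ∈ range (T + 1), ‖x s‖ ^ 2
      ≤ P * (6 * γ ^ (2 * 𝕄) * (3 * ‖x 0‖ ^ 2 + 48 * γ ^ 2 * (c ^ 2 + pibar0 ^ 2))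
          + 8 * c ^ 2 * J) + 2 * c ^ 2 * (T + 1) := hsum.trans (by gcongr)
    _ ≤ _ := by nlinarith [mul_nonneg (sq_nonneg c) (sub_nonneg.mpr hJ')]

/-- Finite-gain l₂ stability of the Exp3-ISS switching algorithm: there exist
constants depending only on (L_f, L_π, κ, ρ, τ) bounding the sum of squared
state norms, with γ = L_f(1+L_π)κ. -/
theorem finite_gain_l2_stability (Lf Lπ κ ρ γ : ℝ) (τ : ℕ)
    (hLf : 1 ≤ Lf) (hLπ : 1 ≤ Lπ) (hκ : 1 ≤ κ) (hρ0 : 0 < ρ) (hρ1 : ρ < 1)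
    (hτ : 1 ≤ τ) (hτρ : 2 * Real.sqrt 2 * κ * ρ ^ τ ≤ 1)
    (hγ : γ = Lf * (1 + Lπ) * κ) :
    ∃ C₁ C₂ C₃ : ℝ, 0 < C₁ ∧ 0 < C₂ ∧ 0 < C₃ ∧
      ∀ (β wmax pibar0 : ℝ) (n m T J 𝕄 : ℕ)
        (f : EuclideanSpace ℝ (Fin n) → EuclideanSpace ℝ (Fin m)
              → EuclideanSpace ℝ (Fin n) → EuclideanSpace ℝ (Fin n))
        (π : ℕ → EuclideanSpace ℝ (Fin n) → EuclideanSpace ℝ (Fin m))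
        (x : ℕ → EuclideanSpace ℝ (Fin n)) (w : ℕ → EuclideanSpace ℝ (Fin n))
        (t : ℕ → ℕ) (B : Finset ℕ),
        1 ≤ β → 0 ≤ wmax → 0 ≤ pibar0 → 1 ≤ J →
        (∀ x u w x' u' w', ‖f x u w - f x' u' w'‖
            ≤ Lf * (‖x - x'‖ + ‖u - u'‖ + ‖w - w'‖)) →
        f 0 0 0 = 0 →
        (∀ s x y, ‖π s x - π s y‖ ≤ Lπ * ‖x - y‖) →
        (∀ s, ‖π s 0‖ ≤ pibar0) →
        (∀ s, ‖w s‖ ≤ wmax) →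
        (∀ s, s < T → x (s + 1) = f (x s) (π s (x s)) (w s)) →
        t 0 = 0 → t J = T + 1 →
        (∀ j, j < J → t j < t (j + 1)) →
        B ⊆ Finset.range (J - 1) → B.card ≤ 𝕄 →
        (∀ j, j < J → ∀ s, t j < s → s + 1 ≤ t (j + 1) →
            ‖x s‖ ≤ κ * ρ ^ (s - t j) * ‖x (t j)‖ + β * wmax) →
        (∀ j, j + 2 ≤ J → j ∉ B →
            t (j + 1) - t j = τ ∧
            ‖x (t (j + 1))‖ ≤ κ * ρ ^ τ * ‖x (t j)‖ + β * wmax) →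
        ∑ s ∈ Finset.range (T + 1), ‖x s‖ ^ 2
          ≤ 2 * β ^ 2 * wmax ^ 2 * ((T : ℝ) + C₁ * (J : ℝ))
            + C₂ * γ ^ (2 * 𝕄) * ‖x 0‖ ^ 2
            + C₃ * γ ^ (2 * 𝕄) * (β ^ 2 * wmax ^ 2 + pibar0 ^ 2) :=
  finite_gain_l2_stability_general Lf Lπ κ ρ γ τ hLf hLπ hκ hρ0 hρ1 hτρ hγ
end

section
/- Let κ ≥ 1, 0 < ρ < 1, L_π ≥ 0, π̄0 ≥ 0, B ≥ 0, L_{c1} ≥ 0, L_{c2} ≥ 0, c₀ ≥ 0 and an integer τ ≥ 1 be given, and let s ≤ e be natural numbers with e − s + 1 ≤ τ. For each t let c_t : ℝ^n × ℝ^m → ℝ satisfy |c_t(x,u) − c_t(x',u')| ≤ (L_{c1}(max(‖x‖,‖x'‖) + max(‖u‖,‖u'‖)) + L_{c2})·(‖x−x'‖ + ‖u−u'‖) for all arguments and 0 ≤ c_t(0,0) ≤ c₀. Let x_t ∈ ℝ^n and u_t ∈ ℝ^m satisfy, for every t with s ≤ t ≤ e: ‖x_t‖ ≤ κ ρ^{t−s}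 ‖x_s‖ + B and ‖u_t‖ ≤ L_π ‖x_t‖ + π̄0. Then ((1/τ)·Σ_{t=s}^{e} c_t(x_t, u_t))² ≤ (1/τ)·(α17·‖x_s‖⁴ + α18·‖x_s‖² + α19·(e−s+1)), where α17 := 160 L_{c1}² (1+8L_π⁴) κ⁴/(1−ρ⁴), α18 := 10 L_{c2}² (1+2L_π²) κ²/(1−ρ²), and α19 := 160 L_{c1}² ((1+8L_π⁴) B⁴ + π̄0⁴) + 10 L_{c2}² ((1+2L_π²) B² + π̄0²) + 5c₀². -/
/-!
Comparing the stage cost with its value at the origin, the local Lipschitz estimate gives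
`|c_t(x_t, u_t)| ≤ L_{c1} S² + L_{c2} S + c₀` with `S = ‖x_t‖ + ‖u_t‖`. Squaring with the weights
`5/2, 5/2, 5` and expanding `S²` and `S⁴` through `(a + b)^k ≤ 2^(k-1) (a^k + b^k)`, once for
`S = ‖x_t‖ + ‖u_t‖`, once for the policy bound and once for the ISS bound, leaves the decaying
terms `ρ^(2(t-s))`, `ρ^(4(t-s))`, whose geometric sums give the factors `1/(1-ρ²)`, `1/(1-ρ⁴)`.
Cauchy–Schwarz over the at most `τ` stages of the batch bounds the squared average by the
average of the squares.
-/

open Finset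

lemma add_pow_le_of_le_add_of_le_mul_add {a b A B L P : ℝ} (k : ℕ) (ha : 0 ≤ a) (hb : 0 ≤ b)
    (hA : 0 ≤ A) (hB : 0 ≤ B) (hL : 0 ≤ L) (hP : 0 ≤ P)
    (hab : a ≤ A + B) (hba : b ≤ L * a + P) :
    (a + b) ^ k ≤ (2 ^ (k - 1)) ^ 2 * (1 + 2 ^ (k - 1) * L ^ k) * (A ^ k + B ^ k)
      + (2 ^ (k - 1)) ^ 2 * P ^ k := by
  have ha_pow : a ^ k ≤ 2 ^ (k - 1) * (A ^ k + B ^ k) :=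
    (pow_le_pow_left₀ ha hab k).trans (add_pow_le hA hB k)
  have hb_pow : b ^ k ≤ 2 ^ (k - 1) * (L ^ k * a ^ k + P ^ k) := by
    rw [← mul_pow]
    exact (pow_le_pow_left₀ hb hba k).trans (add_pow_le (by positivity) hP k)
  calc (a + b) ^ k ≤ 2 ^ (k - 1) * (a ^ k + b ^ k) := add_pow_le ha hb k
    _ ≤ 2 ^ (k - 1) * (a ^ k + 2 ^ (k - 1) * (L ^ k * a ^ k + P ^ k)) := by gcongr
    _ ≤ 2 ^ (k - 1) * (2 ^ (k - 1) * (A ^ k + B ^ k)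
          + 2 ^ (k - 1) * (L ^ k * (2 ^ (k - 1) * (A ^ k + B ^ k)) + P ^ k)) := by gcongr
    _ = _ := by ring

lemma sq_add_add_le (p q r : ℝ) : (p + q + r) ^ 2 ≤ 5 / 2 * p ^ 2 + 5 / 2 * q ^ 2 + 5 * r ^ 2 := by
  nlinarith [sq_nonneg (p - q), sq_nonneg (p - 2 * r), sq_nonneg (q - 2 * r)]

section LocalLipschitzCost

variable {E F : Type*} [SeminormedAddCommGroup E] [SeminormedAddCommGroup F]
  {f : E → F → ℝ} {L₁ L₂ c₀ : ℝ}

def LocalLipschitzCost (L₁ L₂ : ℝ) (f : E → F → ℝ) : Prop :=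
  ∀ (x x' : E) (u u' : F),
    |f x u - f x' u'| ≤ (L₁ * (max ‖x‖ ‖x'‖ + max ‖u‖ ‖u'‖) + L₂) * (‖x - x'‖ + ‖u - u'‖)

lemma abs_le_of_localLipschitzCost (hf : LocalLipschitzCost L₁ L₂ f)
    (h0 : |f 0 0| ≤ c₀) (x : E) (u : F) :
    |f x u| ≤ L₁ * (‖x‖ + ‖u‖) ^ 2 + L₂ * (‖x‖ + ‖u‖) + c₀ := by
  have hx := hf x 0 u 0
  simp only [norm_zero, sub_zero, max_eq_left (norm_nonneg _)] at hx
  calc |f x u| ≤ |f x u - f 0 0| + |f 0 0| :=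
      sub_le_iff_le_add.1 (abs_sub_abs_le_abs_sub _ _)
    _ ≤ (L₁ * (‖x‖ + ‖u‖) + L₂) * (‖x‖ + ‖u‖) + c₀ := add_le_add hx h0
    _ = _ := by ring

lemma sq_le_of_localLipschitzCost (hf : LocalLipschitzCost L₁ L₂ f)
    (h0 : |f 0 0| ≤ c₀) (x : E) (u : F) :
    f x u ^ 2 ≤ 5 / 2 * L₁ ^ 2 * (‖x‖ + ‖u‖) ^ 4 + 5 / 2 * L₂ ^ 2 * (‖x‖ + ‖u‖) ^ 2
      + 5 * c₀ ^ 2 := by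
  calc f x u ^ 2 = |f x u| ^ 2 := (sq_abs _).symm
    _ ≤ (L₁ * (‖x‖ + ‖u‖) ^ 2 + L₂ * (‖x‖ + ‖u‖) + c₀) ^ 2 :=
      pow_le_pow_left₀ (abs_nonneg _) (abs_le_of_localLipschitzCost hf h0 x u) 2
    _ ≤ _ := (sq_add_add_le _ _ _).trans_eq (by ring)

lemma sq_le_of_localLipschitzCost_of_le {Lπ P R B : ℝ} {x : E} {u : F}
    (hf : LocalLipschitzCost L₁ L₂ f)
    (h0 : |f 0 0| ≤ c₀) (hR : 0 ≤ R) (hB : 0 ≤ B) (hLπ : 0 ≤ Lπ) (hP : 0 ≤ P)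
    (hx : ‖x‖ ≤ R + B) (hu : ‖u‖ ≤ Lπ * ‖x‖ + P) :
    f x u ^ 2 ≤ 160 * L₁ ^ 2 * (1 + 8 * Lπ ^ 4) * R ^ 4 + 10 * L₂ ^ 2 * (1 + 2 * Lπ ^ 2) * R ^ 2
      + (160 * L₁ ^ 2 * ((1 + 8 * Lπ ^ 4) * B ^ 4 + P ^ 4)
        + 10 * L₂ ^ 2 * ((1 + 2 * Lπ ^ 2) * B ^ 2 + P ^ 2) + 5 * c₀ ^ 2) := by
  have bound (k : ℕ) :=
    add_pow_le_of_le_add_of_le_mul_add k (norm_nonneg x) (norm_nonneg u) hR hB hLπ hP hx hu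
  calc f x u ^ 2
    _ ≤ 5 / 2 * L₁ ^ 2 * (‖x‖ + ‖u‖) ^ 4 + 5 / 2 * L₂ ^ 2 * (‖x‖ + ‖u‖) ^ 2 + 5 * c₀ ^ 2 :=
      sq_le_of_localLipschitzCost hf h0 x u
    _ ≤ 5 / 2 * L₁ ^ 2 * (64 * (1 + 8 * Lπ ^ 4) * (R ^ 4 + B ^ 4) + 64 * P ^ 4)
        + 5 / 2 * L₂ ^ 2 * (4 * (1 + 2 * Lπ ^ 2) * (R ^ 2 + B ^ 2) + 4 * P ^ 2)
        + 5 * c₀ ^ 2 := by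
      gcongr
      · exact (bound 4).trans_eq (by norm_num)
      · exact (bound 2).trans_eq (by norm_num)
    _ = _ := by ring

end LocalLipschitzCost

lemma sum_Icc_mul_pow_sub_le {a y : ℝ} (ha : 0 ≤ a) (hy₀ : 0 ≤ y) (hy₁ : y < 1) (s e : ℕ) :
    ∑ t ∈ Icc s e, a * y ^ (t - s) ≤ a / (1 - y) := by
  rw [← mul_sum, ← mul_one_div]
  gcongr
  rw [← Ico_add_one_right_eq_Icc, sum_Ico_eq_sum_range, range_eq_Ico]
  simpa using geom_sum_Ico_le_of_lt_one (m := 0) (n := e + 1 - s) hy₀ hy₁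

lemma sum_Icc_le_of_le_mul_pow_add_mul_pow_add {g : ℕ → ℝ} {a b d y z : ℝ} {s e : ℕ}
    (ha : 0 ≤ a) (hb : 0 ≤ b) (hd : 0 ≤ d) (hy₀ : 0 ≤ y) (hy₁ : y < 1) (hz₀ : 0 ≤ z) (hz₁ : z < 1)
    (hg : ∀ t ∈ Icc s e, g t ≤ a * y ^ (t - s) + b * z ^ (t - s) + d) :
    ∑ t ∈ Icc s e, g t ≤ a / (1 - y) + b / (1 - z) + ((e - s + 1 : ℕ) : ℝ) * d := by
  refine (sum_le_sum hg).trans ?_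
  rw [sum_add_distrib, sum_add_distrib, sum_const, nsmul_eq_mul]
  gcongr
  · exact sum_Icc_mul_pow_sub_le ha hy₀ hy₁ s e
  · exact sum_Icc_mul_pow_sub_le hb hz₀ hz₁ s e
  · simp only [Nat.card_Icc]; omega

lemma sq_inv_mul_sum_le_inv_mul_sum_sq {ι : Type*} (S : Finset ι) (f : ι → ℝ) {τ : ℝ}
    (hτ : (#S : ℝ) ≤ τ) :
    (1 / τ * ∑ i ∈ S, f i) ^ 2 ≤ 1 / τ * ∑ i ∈ S, f i ^ 2 := by
  rcases ((Nat.cast_nonneg _).trans hτ).eq_or_lt with rfl | hτ₀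
  · simp
  calc (1 / τ * ∑ i ∈ S, f i) ^ 2 = (∑ i ∈ S, f i) ^ 2 / τ ^ 2 := by ring
    _ ≤ (τ * ∑ i ∈ S, f i ^ 2) / τ ^ 2 := by
      gcongr
      exact sq_sum_le_card_mul_sum_sq.trans (by gcongr)
    _ = 1 / τ * ∑ i ∈ S, f i ^ 2 := by field_simp

theorem batch_cost_sq_bound_general (n m : ℕ) (κ ρ Lπ pibar0 B Lc1 Lc2 c0 α17 α18 α19 : ℝ)
    (τ : ℕ) (hκ : 1 ≤ κ) (hρ0 : 0 < ρ) (hρ1 : ρ < 1) (hLπ : 0 ≤ Lπ)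
    (hpibar0 : 0 ≤ pibar0) (hB : 0 ≤ B)
    (hα17 : α17 = 160 * Lc1 ^ 2 * (1 + 8 * Lπ ^ 4) * κ ^ 4 / (1 - ρ ^ 4))
    (hα18 : α18 = 10 * Lc2 ^ 2 * (1 + 2 * Lπ ^ 2) * κ ^ 2 / (1 - ρ ^ 2))
    (hα19 : α19 = 160 * Lc1 ^ 2 * ((1 + 8 * Lπ ^ 4) * B ^ 4 + pibar0 ^ 4)
        + 10 * Lc2 ^ 2 * ((1 + 2 * Lπ ^ 2) * B ^ 2 + pibar0 ^ 2) + 5 * c0 ^ 2)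
    (s e : ℕ) (hlen : e - s + 1 ≤ τ)
    (c : ℕ → EuclideanSpace ℝ (Fin n) → EuclideanSpace ℝ (Fin m) → ℝ)
    (hc : ∀ (t : ℕ) (x x' : EuclideanSpace ℝ (Fin n)) (u u' : EuclideanSpace ℝ (Fin m)),
        |c t x u - c t x' u'| ≤ (Lc1 * (max ‖x‖ ‖x'‖ + max ‖u‖ ‖u'‖) + Lc2)
          * (‖x - x'‖ + ‖u - u'‖))
    (hc00 : ∀ t : ℕ, 0 ≤ c t 0 0 ∧ c t 0 0 ≤ c0)
    (x : ℕ → EuclideanSpace ℝ (Fin n)) (u : ℕ → EuclideanSpace ℝ (Fin m))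
    (hx : ∀ t, s ≤ t → t ≤ e → ‖x t‖ ≤ κ * ρ ^ (t - s) * ‖x s‖ + B)
    (hu : ∀ t, s ≤ t → t ≤ e → ‖u t‖ ≤ Lπ * ‖x t‖ + pibar0) :
    (1 / (τ : ℝ) * ∑ t ∈ Finset.Icc s e, c t (x t) (u t)) ^ 2
      ≤ 1 / (τ : ℝ) * (α17 * ‖x s‖ ^ 4 + α18 * ‖x s‖ ^ 2
          + α19 * ((e - s + 1 : ℕ) : ℝ)) := by
  set X := ‖x s‖
  have hρ₀ := hρ0.le
  have hstage : ∀ t ∈ Icc s e, c t (x t) (u t) ^ 2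
      ≤ 160 * Lc1 ^ 2 * (1 + 8 * Lπ ^ 4) * κ ^ 4 * X ^ 4 * (ρ ^ 4) ^ (t - s)
        + 10 * Lc2 ^ 2 * (1 + 2 * Lπ ^ 2) * κ ^ 2 * X ^ 2 * (ρ ^ 2) ^ (t - s) + α19 := by
    intro t ht
    obtain ⟨hst, hte⟩ := mem_Icc.1 ht
    have h0 : |c t 0 0| ≤ c0 := abs_le.2 ⟨by linarith [hc00 t], (hc00 t).2⟩
    refine (sq_le_of_localLipschitzCost_of_le (hc t) h0 (by positivity) hB hLπ hpibar0
      (hx t hst hte) (hu t hst hte)).trans_eq ?_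
    rw [hα19]
    ring
  have hsum := sum_Icc_le_of_le_mul_pow_add_mul_pow_add (by positivity) (by positivity)
    (by rw [hα19]; positivity) (by positivity) (pow_lt_one₀ hρ₀ hρ1 (by norm_num))
    (by positivity) (pow_lt_one₀ hρ₀ hρ1 (by norm_num)) hstage
  have hcard : (#(Icc s e) : ℝ) ≤ τ := by
    exact_mod_cast (by simp only [Nat.card_Icc]; omega : #(Icc s e) ≤ τ)
  calc _ ≤ 1 / (τ : ℝ) * ∑ t ∈ Icc s e, c t (x t) (u t) ^ 2 :=
        sq_inv_mul_sum_le_inv_mul_sum_sq _ _ hcard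
    _ ≤ _ := by
      gcongr
      exact hsum.trans_eq (by rw [hα17, hα18]; ring)

/-- Bound on the squared average batch cost used in the auxiliary-regret
analysis: within a batch of length at most τ starting at stage s, the state
satisfies the E-ISS certificate with offset B, the input comes from an
L_π-Lipschitz policy, and the stage costs satisfy the paper's local Lipschitz
assumption with 0 ≤ c_t(0,0) ≤ c₀. -/
theorem batch_cost_sq_bound (n m : ℕ) (κ ρ Lπ pibar0 B Lc1 Lc2 c0 α17 α18 α19 : ℝ)
    (τ : ℕ) (hκ : 1 ≤ κ) (hρ0 : 0 < ρ) (hρ1 : ρ < 1) (hLπ : 0 ≤ Lπ)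
    (hpibar0 : 0 ≤ pibar0) (hB : 0 ≤ B) (hLc1 : 0 ≤ Lc1) (hLc2 : 0 ≤ Lc2)
    (hc0 : 0 ≤ c0) (hτ : 1 ≤ τ)
    (hα17 : α17 = 160 * Lc1 ^ 2 * (1 + 8 * Lπ ^ 4) * κ ^ 4 / (1 - ρ ^ 4))
    (hα18 : α18 = 10 * Lc2 ^ 2 * (1 + 2 * Lπ ^ 2) * κ ^ 2 / (1 - ρ ^ 2))
    (hα19 : α19 = 160 * Lc1 ^ 2 * ((1 + 8 * Lπ ^ 4) * B ^ 4 + pibar0 ^ 4)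
        + 10 * Lc2 ^ 2 * ((1 + 2 * Lπ ^ 2) * B ^ 2 + pibar0 ^ 2) + 5 * c0 ^ 2)
    (s e : ℕ) (hse : s ≤ e) (hlen : e - s + 1 ≤ τ)
    (c : ℕ → EuclideanSpace ℝ (Fin n) → EuclideanSpace ℝ (Fin m) → ℝ)
    (hc : ∀ (t : ℕ) (x x' : EuclideanSpace ℝ (Fin n)) (u u' : EuclideanSpace ℝ (Fin m)),
        |c t x u - c t x' u'| ≤ (Lc1 * (max ‖x‖ ‖x'‖ + max ‖u‖ ‖u'‖) + Lc2)
          * (‖x - x'‖ + ‖u - u'‖))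
    (hc00 : ∀ t : ℕ, 0 ≤ c t 0 0 ∧ c t 0 0 ≤ c0)
    (x : ℕ → EuclideanSpace ℝ (Fin n)) (u : ℕ → EuclideanSpace ℝ (Fin m))
    (hx : ∀ t, s ≤ t → t ≤ e → ‖x t‖ ≤ κ * ρ ^ (t - s) * ‖x s‖ + B)
    (hu : ∀ t, s ≤ t → t ≤ e → ‖u t‖ ≤ Lπ * ‖x t‖ + pibar0) :
    (1 / (τ : ℝ) * ∑ t ∈ Finset.Icc s e, c t (x t) (u t)) ^ 2
      ≤ 1 / (τ : ℝ) * (α17 * ‖x s‖ ^ 4 + α18 * ‖x s‖ ^ 2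
          + α19 * ((e - s + 1 : ℕ) : ℝ)) :=
  batch_cost_sq_bound_general n m κ ρ Lπ pibar0 B Lc1 Lc2 c0 α17 α18 α19 τ hκ hρ0 hρ1 hLπ hpibar0 hB
    hα17 hα18 hα19 s e hlen c hc hc00 x u hx hu
end
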